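/- arXiv:1905.11972 — 9 statements merged into one kernel-verified Lean document; each statement's English description precedes it below -/
import Mathlib

section
/- Let 𝒳, 𝒰, 𝒴 be finite types. Let q : 𝒳 → 𝒰 → ℝ be an encoder kernel (q(u|x) ≥ 0 and ∑_u q(u|x) = 1 for each x), and let Q̂, Q' : 𝒰 → 𝒴 → ℝ be two decoders (nonnegative, summing to 1 in y for each u) with Q̂(y|u) > 0 and Q'(y|u) > 0 for all u, y. Define the losses ℓ_Q(x,y) = ∑_u q(u|x)·(−log Q(y|u)) for Q ∈ {Q̂, Q'}, and T(x,y) = ∑_u q(u|x)·log(Q'(y|u)/Q̂(y|u)). Let P be a pmf on 𝒳 × 𝒴 and let ((x_1,y_1),…,(x_n,y_n)) be any finite sequence in 𝒳 × 𝒴. For a decoder Q set Gap(Q) = |(1/n)∑_{i=1}^n ℓ_Q(x_i,y_i) − ∑_{(x,y)} P(x,y) ℓ_Q(x,y)|. Then Gap(Q̂) ≤ Gap(Q') + |(1/n)∑_{i=1}^n T(x_i,y_i) − ∑_{(x,y)} P(x,y) T(x,y)|. -/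
/-- Lemma 2: the error gap of the cross-entropy loss with decoder `Qh` is bounded by
the error gap with decoder `Q'` plus the empirical deviation of the log-likelihood
ratio statistic `T`. -/
theorem gap_decoder_change
    {𝒳 𝒰 𝒴 : Type*} [Fintype 𝒳] [Fintype 𝒰] [Fintype 𝒴]
    (q : 𝒳 → 𝒰 → ℝ) (hq0 : ∀ x u, 0 ≤ q x u) (hq1 : ∀ x, ∑ u, q x u = 1)
    (Qh Q' : 𝒰 → 𝒴 → ℝ)
    (hQh0 : ∀ u y, 0 < Qh u y) (hQh1 : ∀ u, ∑ y, Qh u y = 1)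
    (hQ'0 : ∀ u y, 0 < Q' u y) (hQ'1 : ∀ u, ∑ y, Q' u y = 1)
    (P : 𝒳 × 𝒴 → ℝ) (hP0 : ∀ z, 0 ≤ P z) (hP1 : ∑ z, P z = 1)
    (n : ℕ) (hn : 0 < n) (S : Fin n → 𝒳 × 𝒴) :
    let ℓ : (𝒰 → 𝒴 → ℝ) → 𝒳 → 𝒴 → ℝ :=
      fun Q x y => ∑ u, q x u * (-Real.log (Q u y));
    let T : 𝒳 → 𝒴 → ℝ := fun x y => ∑ u, q x u * Real.log (Q' u y / Qh u y);
    let Gap : (𝒰 → 𝒴 → ℝ) → ℝ := fun Q =>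
      |(1 / (n : ℝ)) * ∑ i, ℓ Q (S i).1 (S i).2 - ∑ z, P z * ℓ Q z.1 z.2|;
    Gap Qh ≤ Gap Q' +
      |(1 / (n : ℝ)) * ∑ i, T (S i).1 (S i).2 - ∑ z, P z * T z.1 z.2| := by
  intro ℓ T Gap
  have key : ∀ x y, ℓ Qh x y = ℓ Q' x y + T x y := by
    intro x y
    simp only [ℓ, T, ← Finset.sum_add_distrib]
    refine Finset.sum_congr rfl fun u _ => ?_
    rw [Real.log_div (ne_of_gt (hQ'0 u y)) (ne_of_gt (hQh0 u y))]
    ring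
  have hsum1 : ∑ i, ℓ Qh (S i).1 (S i).2 =
      ∑ i, ℓ Q' (S i).1 (S i).2 + ∑ i, T (S i).1 (S i).2 := by
    rw [← Finset.sum_add_distrib]
    exact Finset.sum_congr rfl fun i _ => key _ _
  have hsum2 : ∑ z, P z * ℓ Qh z.1 z.2 =
      ∑ z, P z * ℓ Q' z.1 z.2 + ∑ z, P z * T z.1 z.2 := by
    rw [← Finset.sum_add_distrib]
    refine Finset.sum_congr rfl fun z _ => ?_
    rw [key]; ring
  calc Gap Qh = |((1 / (n : ℝ)) * ∑ i, ℓ Q' (S i).1 (S i).2 - ∑ z, P z * ℓ Q' z.1 z.2)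
      + ((1 / (n : ℝ)) * ∑ i, T (S i).1 (S i).2 - ∑ z, P z * T z.1 z.2)| := by
        simp only [Gap, hsum1, hsum2]; ring_nf
    _ ≤ Gap Q' + |(1 / (n : ℝ)) * ∑ i, T (S i).1 (S i).2 - ∑ z, P z * T z.1 z.2| :=
        abs_add_le _ _
end

section
/- Let 𝒳, 𝒰, 𝒴 be finite types, let P and P̂ be pmfs on 𝒳 × 𝒴 with P(x,y) > 0 for all (x,y), and let q : 𝒳 → 𝒰 → ℝ be an encoder kernel with q(u|x) > 0 for all u, x. Define the induced quantities for P: q_U(u) = ∑_{(x,y)} P(x,y) q(u|x) and Q_{Y|U}(y|u) = (∑_x P(x,y) q(u|x)) / q_U(u), and analogously q̂_U and Q̂_{Y|U} for P̂ (on the support of P̂). Then the conditional KL divergence of the induced decoders is bounded by the joint KL divergence: ∑_u q̂_U(u) ∑_y Q̂_{Y|U}(y|u) log(Q̂_{Y|U}(y|u)/Q_{Y|U}(y|u)) ≤ ∑_{(x,y) : P̂(x,y)>0} P̂(x,y) log(P̂(x,y)/P(x,y)). -/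
open Finset

lemma log_sum_ineq {ι : Type*} (s : Finset ι) (a b : ι → ℝ)
    (ha : ∀ i ∈ s, 0 ≤ a i) (hb : ∀ i ∈ s, 0 < b i) :
    (∑ i ∈ s, a i) * Real.log ((∑ i ∈ s, a i) / (∑ i ∈ s, b i)) ≤
      ∑ i ∈ s, a i * Real.log (a i / b i) := by
  rcases s.eq_empty_or_nonempty with rfl | hs
  · simp
  · set A := ∑ i ∈ s, a i with hA
    set B := ∑ i ∈ s, b i with hB
    have hBpos : 0 < B := Finset.sum_pos hb hs
    have h := Real.convexOn_mul_log.map_sum_le (t := s)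
      (w := fun i => b i / B) (p := fun i => a i / b i)
      (fun i hi => div_nonneg (hb i hi).le hBpos.le)
      (by rw [← Finset.sum_div, div_self hBpos.ne'])
      (fun i hi => div_nonneg (ha i hi) (hb i hi).le)
    have e1 : ∑ i ∈ s, (b i / B) • (a i / b i) = A / B := by
      rw [hA, Finset.sum_div]
      refine Finset.sum_congr rfl fun i hi => ?_
      have := (hb i hi).ne'
      rw [smul_eq_mul]
      field_simp
    have e2 : ∑ i ∈ s, (b i / B) • ((a i / b i) * Real.log (a i / b i))
        = (∑ i ∈ s, a i * Real.log (a i / b i)) / B := by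
      rw [Finset.sum_div]
      refine Finset.sum_congr rfl fun i hi => ?_
      have := (hb i hi).ne'
      rw [smul_eq_mul]
      field_simp
    rw [e1, e2] at h
    have h2 := mul_le_mul_of_nonneg_right h hBpos.le
    rw [div_mul_cancel₀ _ hBpos.ne'] at h2
    calc A * Real.log (A / B) = A / B * Real.log (A / B) * B := by
          field_simp
      _ ≤ _ := h2

/-- The conditional KL divergence of the induced decoders is bounded by the joint KL
divergence: `D(Q̂_{Y|U} ‖ Q_{Y|U} | q̂_U) ≤ D(P̂_{XY} ‖ P_{XY})`. -/
theorem condKL_le_jointKL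
    {𝒳 𝒰 𝒴 : Type*} [Fintype 𝒳] [Fintype 𝒰] [Fintype 𝒴]
    (P : 𝒳 × 𝒴 → ℝ) (hP0 : ∀ z, 0 < P z) (hP1 : ∑ z, P z = 1)
    (Phat : 𝒳 × 𝒴 → ℝ) (hPhat0 : ∀ z, 0 ≤ Phat z) (hPhat1 : ∑ z, Phat z = 1)
    (q : 𝒳 → 𝒰 → ℝ) (hq0 : ∀ x u, 0 < q x u) (hq1 : ∀ x, ∑ u, q x u = 1) :
    let qU : 𝒰 → ℝ := fun u => ∑ z : 𝒳 × 𝒴, P z * q z.1 u;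
    let QYU : 𝒴 → 𝒰 → ℝ := fun y u => (∑ x, P (x, y) * q x u) / qU u;
    let qUhat : 𝒰 → ℝ := fun u => ∑ z : 𝒳 × 𝒴, Phat z * q z.1 u;
    let QYUhat : 𝒴 → 𝒰 → ℝ := fun y u => (∑ x, Phat (x, y) * q x u) / qUhat u;
    ∑ u, qUhat u * ∑ y, QYUhat y u * Real.log (QYUhat y u / QYU y u) ≤
      ∑ z ∈ Finset.univ.filter (fun z : 𝒳 × 𝒴 => 0 < Phat z),
        Phat z * Real.log (Phat z / P z) := by
  intro qU QYU qUhat QYUhat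
  -- nonemptiness
  have huniv : (Finset.univ : Finset (𝒳 × 𝒴)).Nonempty := by
    by_contra h
    rw [Finset.not_nonempty_iff_eq_empty] at h
    rw [h, Finset.sum_empty] at hP1
    norm_num at hP1
  have hX : Nonempty 𝒳 := ⟨(Finset.univ_nonempty_iff.mp huniv).some.1⟩
  have hXuniv : (Finset.univ : Finset 𝒳).Nonempty := Finset.univ_nonempty
  -- positivity of marginals
  have hqUpos : ∀ u, 0 < qU u := fun u =>
    Finset.sum_pos (fun z _ => mul_pos (hP0 z) (hq0 z.1 u)) huniv
  obtain ⟨z0, hz0⟩ : ∃ z, 0 < Phat z := by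
    by_contra h
    push_neg at h
    have : ∀ z, Phat z = 0 := fun z => le_antisymm (h z) (hPhat0 z)
    simp [this] at hPhat1
  have hqUhatpos : ∀ u, 0 < qUhat u := fun u =>
    Finset.sum_pos' (fun z _ => mul_nonneg (hPhat0 z) (hq0 z.1 u).le)
      ⟨z0, Finset.mem_univ _, mul_pos hz0 (hq0 z0.1 u)⟩
  have hRpos : ∀ u y, 0 < ∑ x, P (x, y) * q x u := fun u y =>
    Finset.sum_pos (fun x _ => mul_pos (hP0 _) (hq0 x u)) hXuniv
  have hRhatnn : ∀ u y, 0 ≤ ∑ x, Phat (x, y) * q x u := fun u y =>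
    Finset.sum_nonneg fun x _ => mul_nonneg (hPhat0 _) (hq0 x u).le
  have hsumRhat : ∀ u, ∑ y, ∑ x, Phat (x, y) * q x u = qUhat u := by
    intro u
    show _ = ∑ z : 𝒳 × 𝒴, Phat z * q z.1 u
    rw [Fintype.sum_prod_type, Finset.sum_comm]
  -- total masses of the induced distributions
  have hsum_qU : ∑ u, qU u = 1 := by
    show ∑ u, ∑ z : 𝒳 × 𝒴, P z * q z.1 u = 1
    rw [Finset.sum_comm]
    calc ∑ z : 𝒳 × 𝒴, ∑ u, P z * q z.1 u
        = ∑ z : 𝒳 × 𝒴, P z := by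
          refine Finset.sum_congr rfl fun z _ => ?_
          rw [← Finset.mul_sum, hq1, mul_one]
      _ = 1 := hP1
  have hsum_qUhat : ∑ u, qUhat u = 1 := by
    show ∑ u, ∑ z : 𝒳 × 𝒴, Phat z * q z.1 u = 1
    rw [Finset.sum_comm]
    calc ∑ z : 𝒳 × 𝒴, ∑ u, Phat z * q z.1 u
        = ∑ z : 𝒳 × 𝒴, Phat z := by
          refine Finset.sum_congr rfl fun z _ => ?_
          rw [← Finset.mul_sum, hq1, mul_one]
      _ = 1 := hPhat1
  -- rewrite LHS with joint weights
  have hLHS : ∑ u, qUhat u * ∑ y, QYUhat y u * Real.log (QYUhat y u / QYU y u)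
      = ∑ u, ∑ y, (∑ x, Phat (x, y) * q x u) * Real.log (QYUhat y u / QYU y u) := by
    refine Finset.sum_congr rfl fun u _ => ?_
    rw [Finset.mul_sum]
    refine Finset.sum_congr rfl fun y _ => ?_
    rw [← mul_assoc]
    congr 1
    show qUhat u * ((∑ x, Phat (x, y) * q x u) / qUhat u) = _
    rw [mul_div_cancel₀ _ (hqUhatpos u).ne']
  -- split the logarithm
  have hsplit : ∀ u y, (∑ x, Phat (x, y) * q x u) * Real.log (QYUhat y u / QYU y u)
      = (∑ x, Phat (x, y) * q x u) *
          Real.log ((∑ x, Phat (x, y) * q x u) / (∑ x, P (x, y) * q x u))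
        + (∑ x, Phat (x, y) * q x u) * Real.log (qU u / qUhat u) := by
    intro u y
    rcases eq_or_lt_of_le (hRhatnn u y) with h | h
    · rw [← h]; ring
    · have hkey : QYUhat y u / QYU y u
          = ((∑ x, Phat (x, y) * q x u) / (∑ x, P (x, y) * q x u)) * (qU u / qUhat u) := by
        show ((∑ x, Phat (x, y) * q x u) / qUhat u) / ((∑ x, P (x, y) * q x u) / qU u) = _
        rw [div_div_div_eq]
        rw [div_mul_div_comm]
        ring_nf
      rw [hkey, Real.log_mul (div_pos h (hRpos u y)).ne' (div_pos (hqUpos u) (hqUhatpos u)).ne',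
        mul_add]
  -- conclude
  rw [hLHS]
  have hrw : ∑ u, ∑ y, (∑ x, Phat (x, y) * q x u) * Real.log (QYUhat y u / QYU y u)
      = (∑ u, ∑ y, (∑ x, Phat (x, y) * q x u) *
          Real.log ((∑ x, Phat (x, y) * q x u) / (∑ x, P (x, y) * q x u)))
        + ∑ u, (∑ y, ∑ x, Phat (x, y) * q x u) * Real.log (qU u / qUhat u) := by
    rw [← Finset.sum_add_distrib]
    refine Finset.sum_congr rfl fun u _ => ?_
    rw [Finset.sum_mul, ← Finset.sum_add_distrib]
    exact Finset.sum_congr rfl fun y _ => hsplit u y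
  rw [hrw]
  -- second term is nonpositive (Gibbs' inequality)
  have hGibbs : ∑ u, (∑ y, ∑ x, Phat (x, y) * q x u) * Real.log (qU u / qUhat u) ≤ 0 := by
    have e : ∀ u, (∑ y, ∑ x, Phat (x, y) * q x u) * Real.log (qU u / qUhat u)
        = -(qUhat u * Real.log (qUhat u / qU u)) := by
      intro u
      rw [hsumRhat u, Real.log_div (hqUpos u).ne' (hqUhatpos u).ne',
        Real.log_div (hqUhatpos u).ne' (hqUpos u).ne']
      ring
    rw [Finset.sum_congr rfl fun u _ => e u, Finset.sum_neg_distrib, neg_nonpos]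
    have := log_sum_ineq Finset.univ qUhat qU (fun u _ => (hqUhatpos u).le)
      (fun u _ => hqUpos u)
    rw [hsum_qU, hsum_qUhat] at this
    simpa using this
  -- first term is at most the joint KL (log-sum inequality)
  have hfirst : ∑ u, ∑ y, (∑ x, Phat (x, y) * q x u) *
      Real.log ((∑ x, Phat (x, y) * q x u) / (∑ x, P (x, y) * q x u))
      ≤ ∑ z ∈ Finset.univ.filter (fun z : 𝒳 × 𝒴 => 0 < Phat z),
          Phat z * Real.log (Phat z / P z) := by
    have step : ∑ u, ∑ y, (∑ x, Phat (x, y) * q x u) *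
        Real.log ((∑ x, Phat (x, y) * q x u) / (∑ x, P (x, y) * q x u))
        ≤ ∑ u, ∑ y, ∑ x, (Phat (x, y) * q x u) *
            Real.log ((Phat (x, y) * q x u) / (P (x, y) * q x u)) := by
      refine Finset.sum_le_sum fun u _ => Finset.sum_le_sum fun y _ => ?_
      exact log_sum_ineq Finset.univ _ _
        (fun x _ => mul_nonneg (hPhat0 _) (hq0 x u).le)
        (fun x _ => mul_pos (hP0 _) (hq0 x u))
    refine step.trans_eq ?_
    have inner : ∀ x y, ∑ u, (Phat (x, y) * q x u) *
        Real.log ((Phat (x, y) * q x u) / (P (x, y) * q x u))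
        = Phat (x, y) * Real.log (Phat (x, y) / P (x, y)) := by
      intro x y
      rcases eq_or_lt_of_le (hPhat0 (x, y)) with h | h
      · simp [← h]
      · have : ∀ u, (Phat (x, y) * q x u) *
            Real.log ((Phat (x, y) * q x u) / (P (x, y) * q x u))
            = (Phat (x, y) * Real.log (Phat (x, y) / P (x, y))) * q x u := by
          intro u
          rw [mul_div_mul_right _ _ (hq0 x u).ne']
          ring
        rw [Finset.sum_congr rfl fun u _ => this u, ← Finset.mul_sum, hq1, mul_one]
    rw [Finset.sum_comm]
    calc ∑ y, ∑ u, ∑ x, (Phat (x, y) * q x u) *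
          Real.log ((Phat (x, y) * q x u) / (P (x, y) * q x u))
        = ∑ y, ∑ x, Phat (x, y) * Real.log (Phat (x, y) / P (x, y)) := by
          refine Finset.sum_congr rfl fun y _ => ?_
          rw [Finset.sum_comm]
          exact Finset.sum_congr rfl fun x _ => inner x y
      _ = ∑ z : 𝒳 × 𝒴, Phat z * Real.log (Phat z / P z) := by
          rw [Fintype.sum_prod_type, Finset.sum_comm]
      _ = ∑ z ∈ Finset.univ.filter (fun z : 𝒳 × 𝒴 => 0 < Phat z),
            Phat z * Real.log (Phat z / P z) := by
          rw [Finset.sum_filter]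
          refine Finset.sum_congr rfl fun z _ => ?_
          by_cases h : 0 < Phat z
          · rw [if_pos h]
          · have : Phat z = 0 := le_antisymm (not_lt.mp h) (hPhat0 z)
            rw [if_neg h, this, zero_mul]
  linarith
end

section
/- For all real numbers c ≤ 0 and x ≥ c, one has x² ≤ 4·e^{−c/2}·(e^{x/2} − 1)². -/
lemma two_mul_le_exp_sub (u : ℝ) (hu : 0 ≤ u) :
    2 * u ≤ Real.exp u - Real.exp (-u) := by
  have hA : 1 + u + u ^ 2 / 2 ≤ Real.exp u := Real.quadratic_le_exp_of_nonneg hu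
  have hB : Real.exp (-u) * Real.exp u = 1 := by
    rw [← Real.exp_add]; simp
  have hBpos : 0 < Real.exp (-u) := Real.exp_pos _
  have hApos : 0 < Real.exp u := Real.exp_pos _
  nlinarith [sq_nonneg (u ^ 2), sq_nonneg u, sq_nonneg (Real.exp u - 1 - u),
    mul_pos hApos hBpos]

/-- Elementary inequality: for `c ≤ 0` and `x ≥ c`, `x² ≤ 4 e^{-c/2} (e^{x/2} - 1)²`. -/
theorem sq_le_exp_bound (c x : ℝ) (hc : c ≤ 0) (hx : c ≤ x) :
    x ^ 2 ≤ 4 * Real.exp (-c / 2) * (Real.exp (x / 2) - 1) ^ 2 := by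
  have h1 : x ^ 2 ≤ 4 * (Real.exp (x / 4) - Real.exp (-x / 4)) ^ 2 := by
    rcases le_or_gt 0 x with h | h
    · have := two_mul_le_exp_sub (x / 4) (by linarith)
      have h4 : -(x / 4) = -x / 4 := by ring
      rw [h4] at this
      nlinarith
    · have := two_mul_le_exp_sub (-x / 4) (by linarith)
      have h4 : -(-x / 4) = x / 4 := by ring
      rw [h4] at this
      nlinarith
  have hB : Real.exp (x / 4) * Real.exp (x / 4) = Real.exp (x / 2) := by
    rw [← Real.exp_add]; ring_nf
  have hC : Real.exp (-x / 4) * Real.exp (-x / 4) = Real.exp (-x / 2) := by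
    rw [← Real.exp_add]; ring_nf
  have hAB : Real.exp (-x / 4) * Real.exp (x / 4) = 1 := by
    rw [← Real.exp_add]; ring_nf; exact Real.exp_zero
  have h2 : (Real.exp (x / 4) - Real.exp (-x / 4)) ^ 2
      = Real.exp (-x / 2) * (Real.exp (x / 2) - 1) ^ 2 := by
    rw [← hB, ← hC]
    linear_combination (2 * Real.exp (-x / 4) * Real.exp (x / 4) -
      Real.exp (x / 4) ^ 2 * (1 + Real.exp (-x / 4) * Real.exp (x / 4))) * hAB
  have h3 : Real.exp (-x / 2) ≤ Real.exp (-c / 2) :=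
    Real.exp_le_exp.mpr (by linarith)
  have h4 : (0 : ℝ) ≤ (Real.exp (x / 2) - 1) ^ 2 := sq_nonneg _
  calc x ^ 2 ≤ 4 * (Real.exp (x / 4) - Real.exp (-x / 4)) ^ 2 := h1
    _ = 4 * Real.exp (-x / 2) * (Real.exp (x / 2) - 1) ^ 2 := by rw [h2]; ring
    _ ≤ 4 * Real.exp (-c / 2) * (Real.exp (x / 2) - 1) ^ 2 := by nlinarith
end

section
/- Let η ∈ (0,1] and let p, q be real numbers with 0 < p ≤ 1, q > 0 and q/p ≥ η. Then (log(p/q))² ≤ (4/√η)·(√(q/p) − 1)². -/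
/-- Pointwise bound on the squared log-likelihood ratio by a squared Hellinger-type
term. -/
theorem sq_log_ratio_le_hellinger
    (η p q : ℝ) (hη : η ∈ Set.Ioc (0 : ℝ) 1)
    (hp0 : 0 < p) (hp1 : p ≤ 1) (hq : 0 < q) (hratio : η ≤ q / p) :
    (Real.log (p / q)) ^ 2 ≤ (4 / Real.sqrt η) * (Real.sqrt (q / p) - 1) ^ 2 := by
  obtain ⟨hη0, hη1⟩ := hη
  set r := q / p with hrdef
  have hr0 : 0 < r := div_pos hq hp0
  have hlog : Real.log (p / q) = - Real.log r := by
    rw [hrdef, ← Real.log_inv, inv_div]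
  rw [hlog, neg_pow]
  simp only [neg_neg, one_mul, neg_one_sq]
  -- now goal : (Real.log r)^2 ≤ 4 / √η * (√r - 1)^2
  set a := Real.sqrt (Real.sqrt η) with ha
  have hηs : 0 < Real.sqrt η := Real.sqrt_pos.mpr hη0
  have ha0 : 0 < a := Real.sqrt_pos.mpr hηs
  have ha2 : a ^ 2 = Real.sqrt η := Real.sq_sqrt hηs.le
  have ha1 : a ≤ 1 := by
    rw [ha]
    have : Real.sqrt η ≤ 1 := by
      rw [show (1:ℝ) = Real.sqrt 1 by simp]
      exact Real.sqrt_le_sqrt hη1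
    calc Real.sqrt (Real.sqrt η) ≤ Real.sqrt 1 := Real.sqrt_le_sqrt this
      _ = 1 := Real.sqrt_one
  have key : |Real.log r| * a ≤ 2 * |Real.sqrt r - 1| := by
    rcases le_total 1 r with h1 | h1
    · -- r ≥ 1
      have hs1 : 1 ≤ Real.sqrt r := by
        rw [show (1:ℝ) = Real.sqrt 1 by simp]
        exact Real.sqrt_le_sqrt h1
      have hlr : 0 ≤ Real.log r := Real.log_nonneg h1
      rw [abs_of_nonneg hlr, abs_of_nonneg (by linarith)]
      have hlogle : Real.log r ≤ 2 * (Real.sqrt r - 1) := by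
        have := Real.log_le_sub_one_of_pos (Real.sqrt_pos.mpr hr0)
        have hls : Real.log (Real.sqrt r) = Real.log r / 2 := Real.log_sqrt hr0.le
        rw [hls] at this
        linarith
      nlinarith [hlr]
    · -- r ≤ 1
      set b := Real.sqrt (Real.sqrt r) with hb
      have hrs : 0 < Real.sqrt r := Real.sqrt_pos.mpr hr0
      have hb0 : 0 < b := Real.sqrt_pos.mpr hrs
      have hb2 : b ^ 2 = Real.sqrt r := Real.sq_sqrt hrs.le
      have hab : a ≤ b := by
        rw [ha, hb]
        exact Real.sqrt_le_sqrt (Real.sqrt_le_sqrt hratio)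
      have hlogb : Real.log b = Real.log r / 4 := by
        rw [hb, Real.log_sqrt hrs.le, Real.log_sqrt hr0.le]
        ring
      have hlr : Real.log r ≤ 0 := Real.log_nonpos hr0.le h1
      have hs1 : Real.sqrt r ≤ 1 := by
        rw [show (1:ℝ) = Real.sqrt 1 by simp]
        exact Real.sqrt_le_sqrt h1
      -- sinh inequality with s = -log b ≥ 0
      have hs : (0:ℝ) ≤ -Real.log b := by rw [hlogb]; linarith
      have hsinh : -Real.log b ≤ Real.sinh (-Real.log b) := Real.self_le_sinh_iff.mpr hs
      rw [Real.sinh_eq] at hsinh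
      have he1 : Real.exp (-Real.log b) = 1 / b := by
        rw [Real.exp_neg, Real.exp_log hb0]; ring
      have he2 : Real.exp (-(-Real.log b)) = b := by
        rw [neg_neg, Real.exp_log hb0]
      rw [he1, he2] at hsinh
      -- hsinh : -log b ≤ (1/b - b)/2
      have hkey : -Real.log r * b ≤ 2 * (1 - Real.sqrt r) := by
        have h2 : -Real.log r / 4 ≤ (1 / b - b) / 2 := by rw [hlogb] at hsinh; linarith
        have h3 : -Real.log r * b ≤ 2 * (1 / b - b) * b := by
          have := mul_le_mul_of_nonneg_right (by linarith : -Real.log r ≤ 2 * (1/b - b)) hb0.le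
          linarith
        have h4 : (1 / b - b) * b = 1 - Real.sqrt r := by
          field_simp
          nlinarith [hb2]
        nlinarith [h4]
      rw [abs_of_nonpos hlr, abs_of_nonpos (by linarith : Real.sqrt r - 1 ≤ 0)]
      have : -Real.log r * a ≤ -Real.log r * b :=
        mul_le_mul_of_nonneg_left hab (by linarith)
      linarith
  -- square the key inequality
  have hsq : (Real.log r) ^ 2 * Real.sqrt η ≤ 4 * (Real.sqrt r - 1) ^ 2 := by
    have h1 : (|Real.log r| * a) ^ 2 ≤ (2 * |Real.sqrt r - 1|) ^ 2 := by
      apply pow_le_pow_left₀ (by positivity) key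
    have h2 : (|Real.log r| * a) ^ 2 = (Real.log r) ^ 2 * Real.sqrt η := by
      rw [mul_pow, sq_abs, ha2]
    have h3 : (2 * |Real.sqrt r - 1|) ^ 2 = 4 * (Real.sqrt r - 1) ^ 2 := by
      rw [mul_pow, sq_abs]; ring
    linarith [h1, h2.symm.le, h3.le]
  rw [div_mul_eq_mul_div, le_div_iff₀ hηs]
  linarith
end

section
/- Let 𝒴 be a finite type, let η ∈ (0,1], and let P, Q : 𝒴 → ℝ be pmfs on 𝒴 with P(y) > 0 and Q(y) ≥ η for all y. Then ∑_y P(y)·(log(P(y)/Q(y)))² ≤ (4/√η)·∑_y (√(P(y)) − √(Q(y)))² = (8/√η)·h²(P,Q), where h²(P,Q) = (1/2)∑_y (√(P(y)) − √(Q(y)))² is the squared Hellinger distance. -/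
lemma hasDerivAt_aux {x : ℝ} (hx0 : 0 < x) :
    HasDerivAt (fun x : ℝ => x - x⁻¹ - 2 * Real.log x)
      (1 - (-(x^2)⁻¹) - 2 * x⁻¹) x := by
  have h1 := (hasDerivAt_id x).sub (hasDerivAt_inv hx0.ne')
  have h2 := (Real.hasDerivAt_log hx0.ne').const_mul 2
  exact h1.sub (by simpa using h2)

lemma two_log_le_sub_inv {t : ℝ} (ht : 1 ≤ t) : 2 * Real.log t ≤ t - t⁻¹ := by
  have hmono : MonotoneOn (fun x : ℝ => x - x⁻¹ - 2 * Real.log x) (Set.Ici 1) := by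
    apply monotoneOn_of_deriv_nonneg (convex_Ici 1)
    · apply ContinuousOn.sub
      · exact continuousOn_id.sub (continuousOn_id.inv₀ (fun x hx => by
          have : (1:ℝ) ≤ x := hx
          positivity))
      · exact (continuousOn_const.mul (Real.continuousOn_log.mono (fun x hx => by
          have : (1:ℝ) ≤ x := hx
          simp only [Set.mem_compl_iff, Set.mem_singleton_iff]
          positivity)))
    · intro x hx
      rw [interior_Ici] at hx
      exact (hasDerivAt_aux (lt_trans one_pos hx)).differentiableAt.differentiableWithinAt
    · intro x hx
      rw [interior_Ici] at hx
      have hx0 : (0:ℝ) < x := lt_trans one_pos hx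
      rw [(hasDerivAt_aux hx0).deriv]
      have e : (x^2)⁻¹ = x⁻¹ * x⁻¹ := by rw [sq, mul_inv]
      nlinarith [sq_nonneg (1 - x⁻¹)]
  have := hmono (Set.mem_Ici.mpr (le_refl 1)) (Set.mem_Ici.mpr ht) ht
  simp only [Real.log_one, inv_one] at this
  linarith

lemma mul_sq_log_le {x : ℝ} (hx : 0 < x) : x * (Real.log x) ^ 2 ≤ (x - 1) ^ 2 := by
  rcases le_or_gt 1 x with h | h
  · have hs : (1:ℝ) ≤ Real.sqrt x := by
      rw [show (1:ℝ) = Real.sqrt 1 by simp]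
      exact Real.sqrt_le_sqrt h
    set s := Real.sqrt x with hsdef
    have hs0 : 0 < s := lt_of_lt_of_le one_pos hs
    have hs2 : s ^ 2 = x := Real.sq_sqrt hx.le
    have hlog : Real.log x = 2 * Real.log s := by
      rw [← hs2, Real.log_pow]; push_cast; ring
    have hkey := two_log_le_sub_inv hs
    have hlog0 : 0 ≤ 2 * Real.log s := by
      have := Real.log_nonneg hs; linarith
    have hsq : (2 * Real.log s) ^ 2 ≤ (s - s⁻¹) ^ 2 :=
      pow_le_pow_left₀ hlog0 hkey 2
    have hm := mul_le_mul_of_nonneg_left hsq (sq_nonneg s)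
    calc x * (Real.log x) ^ 2 = s ^ 2 * (2 * Real.log s) ^ 2 := by rw [hlog, hs2]
      _ ≤ s ^ 2 * (s - s⁻¹) ^ 2 := hm
      _ = (x - 1) ^ 2 := by
          rw [← hs2]; field_simp
  · have hx1 : (1:ℝ) ≤ x⁻¹ := (one_le_inv_iff₀).mpr ⟨hx, h.le⟩
    have hxi : (0:ℝ) < x⁻¹ := inv_pos.mpr hx
    -- apply the first case to x⁻¹
    have hrec : x⁻¹ * (Real.log x⁻¹) ^ 2 ≤ (x⁻¹ - 1) ^ 2 := by
      have hs : (1:ℝ) ≤ Real.sqrt x⁻¹ := by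
        rw [show (1:ℝ) = Real.sqrt 1 by simp]
        exact Real.sqrt_le_sqrt hx1
      set s := Real.sqrt x⁻¹ with hsdef
      have hs0 : 0 < s := lt_of_lt_of_le one_pos hs
      have hs2 : s ^ 2 = x⁻¹ := Real.sq_sqrt hxi.le
      have hlog : Real.log x⁻¹ = 2 * Real.log s := by
        rw [← hs2, Real.log_pow]; push_cast; ring
      have hkey := two_log_le_sub_inv hs
      have hlog0 : 0 ≤ 2 * Real.log s := by
        have := Real.log_nonneg hs; linarith
      have hsq : (2 * Real.log s) ^ 2 ≤ (s - s⁻¹) ^ 2 :=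
        pow_le_pow_left₀ hlog0 hkey 2
      have hm := mul_le_mul_of_nonneg_left hsq (sq_nonneg s)
      calc x⁻¹ * (Real.log x⁻¹) ^ 2 = s ^ 2 * (2 * Real.log s) ^ 2 := by rw [hlog, hs2]
        _ ≤ s ^ 2 * (s - s⁻¹) ^ 2 := hm
        _ = (x⁻¹ - 1) ^ 2 := by rw [← hs2]; field_simp
    rw [Real.log_inv] at hrec
    have key := mul_le_mul_of_nonneg_left hrec (sq_nonneg x)
    have e1 : x ^ 2 * (x⁻¹ * (-Real.log x) ^ 2) = x * (Real.log x) ^ 2 := by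
      field_simp
    have e2 : x ^ 2 * (x⁻¹ - 1) ^ 2 = (x - 1) ^ 2 := by
      field_simp; ring
    rw [e1, e2] at key
    exact key

lemma pointwise_bound {η p q : ℝ} (hη : 0 < η) (hp : 0 < p) (hp1 : p ≤ 1)
    (hq : η ≤ q) :
    p * (Real.log (p / q)) ^ 2 ≤ (4 / Real.sqrt η) * (Real.sqrt p - Real.sqrt q) ^ 2 := by
  have hq0 : 0 < q := lt_of_lt_of_le hη hq
  set s := Real.sqrt p with hsdef
  set t := Real.sqrt q with htdef
  have hs0 : 0 < s := Real.sqrt_pos.mpr hp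
  have ht0 : 0 < t := Real.sqrt_pos.mpr hq0
  have hs2 : s ^ 2 = p := Real.sq_sqrt hp.le
  have ht2 : t ^ 2 = q := Real.sq_sqrt hq0.le
  have hs1 : s ≤ 1 := by
    rw [hsdef, show (1:ℝ) = Real.sqrt 1 by simp]
    exact Real.sqrt_le_sqrt hp1
  have htη : Real.sqrt η ≤ t := Real.sqrt_le_sqrt hq
  have hη0 : 0 < Real.sqrt η := Real.sqrt_pos.mpr hη
  set r := s / t with hrdef
  have hr0 : 0 < r := div_pos hs0 ht0
  have hpq : p / q = r ^ 2 := by rw [hrdef, div_pow, hs2, ht2]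
  have hlog : Real.log (p / q) = 2 * Real.log r := by
    rw [hpq, Real.log_pow]; push_cast; ring
  have hB := mul_sq_log_le hr0
  -- multiply by 4 * s * t ≥ 0
  have h1 : 4 * (s * t) * (r * (Real.log r) ^ 2) ≤ 4 * (s * t) * (r - 1) ^ 2 :=
    mul_le_mul_of_nonneg_left hB (by positivity)
  have e1 : 4 * (s * t) * (r * (Real.log r) ^ 2) = p * (2 * Real.log r) ^ 2 := by
    rw [← hs2, hrdef]; field_simp; ring
  have e2 : 4 * (s * t) * (r - 1) ^ 2 = 4 * (s / t) * (s - t) ^ 2 := by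
    rw [hrdef]; field_simp
  rw [e1, e2] at h1
  have h2 : 4 * (s / t) ≤ 4 / Real.sqrt η := by
    rw [show 4 * (s / t) = 4 * s / t by ring, div_le_div_iff₀ ht0 hη0]
    nlinarith
  calc p * (Real.log (p / q)) ^ 2 = p * (2 * Real.log r) ^ 2 := by rw [hlog]
    _ ≤ 4 * (s / t) * (s - t) ^ 2 := h1
    _ ≤ (4 / Real.sqrt η) * (s - t) ^ 2 :=
        mul_le_mul_of_nonneg_right h2 (sq_nonneg _)

/-- Second-moment bound of the log-likelihood ratio via the squared Hellinger
distance. -/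
theorem secondMoment_log_ratio_le_hellinger
    {𝒴 : Type*} [Fintype 𝒴] (η : ℝ) (hη : η ∈ Set.Ioc (0 : ℝ) 1)
    (P Q : 𝒴 → ℝ)
    (hP0 : ∀ y, 0 < P y) (hP1 : ∑ y, P y = 1)
    (hQ0 : ∀ y, η ≤ Q y) (hQ1 : ∑ y, Q y = 1) :
    (∑ y, P y * (Real.log (P y / Q y)) ^ 2 ≤
        (4 / Real.sqrt η) * ∑ y, (Real.sqrt (P y) - Real.sqrt (Q y)) ^ 2) ∧
      (4 / Real.sqrt η) * ∑ y, (Real.sqrt (P y) - Real.sqrt (Q y)) ^ 2 =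
        (8 / Real.sqrt η) *
          ((1 / 2) * ∑ y, (Real.sqrt (P y) - Real.sqrt (Q y)) ^ 2) := by
  constructor
  · rw [Finset.mul_sum]
    apply Finset.sum_le_sum
    intro y _
    have hp1 : P y ≤ 1 := by
      rw [← hP1]
      exact Finset.single_le_sum (fun i _ => (hP0 i).le) (Finset.mem_univ y)
    exact pointwise_bound hη.1 (hP0 y) hp1 (hQ0 y)
  · ring
end

section
/- Let 𝒳, 𝒰, 𝒴 be finite types, let P be a pmf on 𝒳 × 𝒴 with P(x,y) > 0 for all (x,y), let q : 𝒳 → 𝒰 → ℝ be an encoder kernel with q(u|x) > 0 for all u, x, and let η ∈ (0,1]. Define q_U(u) = ∑_{(x,y)} P(x,y) q(u|x), Q^D(y|u) = (∑_x P(x,y) q(u|x))/q_U(u), and let Q̂ : 𝒰 → 𝒴 → ℝ be a decoder with Q̂(y|u) ≥ η for all u, y. Set T(x,y) = ∑_u q(u|x) log(Q^D(y|u)/Q̂(y|u)). Then the variance of T under P satisfies Var_P(T) := ∑_{(x,y)} P(x,y) T(x,y)² − (∑_{(x,y)} P(x,y) T(x,y))² ≤ (8/√η)·D_HL², where D_HL²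 = (1/2)∑_u q_U(u) ∑_y (√(Q̂(y|u)) − √(Q^D(y|u)))² is the squared conditional Hellinger distance between Q^D and Q̂ with respect to q_U. -/
private lemma sqrt_mul_log_le {x : ℝ} (hx : 1 ≤ x) : Real.sqrt x * Real.log x ≤ x - 1 := by
  have hx0 : (0:ℝ) < x := lt_of_lt_of_le one_pos hx
  set y := Real.log x with hy
  have hy0 : 0 ≤ y := Real.log_nonneg hx
  have h2 : Real.exp (y/2) * Real.exp (y/2) = x := by
    rw [← Real.exp_add]
    have : y/2 + y/2 = y := by ring
    rw [this, hy, Real.exp_log hx0]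
  have hs : Real.sqrt x = Real.exp (y/2) := by
    rw [← h2, Real.sqrt_mul_self (Real.exp_pos _).le]
  have hsinh : y/2 ≤ Real.sinh (y/2) := Real.self_le_sinh_iff.2 (by linarith)
  rw [Real.sinh_eq] at hsinh
  have h1 : Real.exp (y/2) * Real.exp (-(y/2)) = 1 := by
    rw [← Real.exp_add]; simp
  have hep : (0:ℝ) < Real.exp (y/2) := Real.exp_pos _
  rw [hs]
  nlinarith [hsinh, hep]

private lemma sqrt_sqrt_log_le {s t : ℝ} (ht : 0 < t) (hts : t ≤ s) :
    Real.sqrt s * Real.sqrt t * (Real.log s - Real.log t) ≤ s - t := by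
  have hs : 0 < s := lt_of_lt_of_le ht hts
  have h := sqrt_mul_log_le (x := s / t) ((one_le_div ht).2 hts)
  rw [Real.log_div hs.ne' ht.ne', Real.sqrt_div hs.le] at h
  have h2 := mul_le_mul_of_nonneg_left h ht.le
  have e1 : t * (s/t - 1) = s - t := by field_simp
  have e2 : t / Real.sqrt t = Real.sqrt t := Real.div_sqrt
  have h5 : t * (Real.sqrt s / Real.sqrt t) = Real.sqrt s * Real.sqrt t := by
    rw [mul_comm, div_mul_eq_mul_div, mul_div_assoc, e2]
  have e3 : t * (Real.sqrt s / Real.sqrt t * (Real.log s - Real.log t))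
      = Real.sqrt s * Real.sqrt t * (Real.log s - Real.log t) := by
    rw [← mul_assoc, h5]
  rw [e1, e3] at h2
  exact h2

private lemma key_ineq {s t : ℝ} (hs : 0 < s) (hs1 : s ≤ 1) (ht : 0 < t) (ht1 : t ≤ 1) :
    t * (s * (Real.log s - Real.log t))^2 ≤ (t - s)^2 := by
  rcases le_total s t with hst | hst
  · have h1 : Real.log t - Real.log s = Real.log (t/s) := (Real.log_div ht.ne' hs.ne').symm
    have h2 : Real.log (t/s) ≤ t/s - 1 := Real.log_le_sub_one_of_pos (div_pos ht hs)
    have h3 : s * (Real.log t - Real.log s) ≤ t - s := by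
      rw [h1]
      have := mul_le_mul_of_nonneg_left h2 hs.le
      have e : s * (t/s - 1) = t - s := by field_simp
      linarith [e ▸ this]
    have h4 : 0 ≤ s * (Real.log t - Real.log s) :=
      mul_nonneg hs.le (sub_nonneg.2 (Real.log_le_log hs hst))
    nlinarith [h3, h4, ht1, sq_nonneg (s * (Real.log t - Real.log s))]
  · have h1 : Real.sqrt s * Real.sqrt t * (Real.log s - Real.log t) ≤ s - t :=
      sqrt_sqrt_log_le ht hst
    have h4 : 0 ≤ Real.sqrt s * Real.sqrt t * (Real.log s - Real.log t) :=
      mul_nonneg (mul_nonneg (Real.sqrt_nonneg _) (Real.sqrt_nonneg _))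
        (sub_nonneg.2 (Real.log_le_log ht hst))
    have hss : Real.sqrt s * Real.sqrt s = s := Real.mul_self_sqrt hs.le
    have htt : Real.sqrt t * Real.sqrt t = t := Real.mul_self_sqrt ht.le
    set D := Real.log s - Real.log t with hD
    have hA2 : (Real.sqrt s * Real.sqrt t * D)^2 ≤ (s - t)^2 := by nlinarith [h1, h4]
    have hA2' : (Real.sqrt s * Real.sqrt t * D)^2 = s * t * D^2 := by
      have : (Real.sqrt s * Real.sqrt t * D)^2
          = (Real.sqrt s * Real.sqrt s) * (Real.sqrt t * Real.sqrt t) * D^2 := by ring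
      rw [this, hss, htt]
    have h6 : s * t * D^2 ≤ (s - t)^2 := by rw [← hA2']; exact hA2
    have h7 : s * (s * t * D^2) ≤ s * (s - t)^2 := mul_le_mul_of_nonneg_left h6 hs.le
    have h8 : s * (s - t)^2 ≤ (s - t)^2 := by nlinarith [sq_nonneg (s - t)]
    have e9 : t * (s * D)^2 = s * (s * t * D^2) := by ring
    have e10 : (t - s)^2 = (s - t)^2 := by ring
    linarith [e9 ▸ le_trans h7 h8]

private lemma core_ineq {p c η : ℝ} (hp0 : 0 ≤ p) (hp1 : p ≤ 1) (hη : 0 < η)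
    (hηc : η ≤ c) (hc1 : c ≤ 1) :
    p * (Real.log (p / c))^2 ≤ (4 / Real.sqrt η) * (Real.sqrt c - Real.sqrt p)^2 := by
  have hc : 0 < c := lt_of_lt_of_le hη hηc
  have hsη : 0 < Real.sqrt η := Real.sqrt_pos.2 hη
  rcases eq_or_lt_of_le hp0 with h0 | hp
  · rw [← h0, zero_mul]
    positivity
  · set s := Real.sqrt p with hsdef
    set t := Real.sqrt c with htdef
    have hs : 0 < s := Real.sqrt_pos.2 hp
    have ht : 0 < t := Real.sqrt_pos.2 hc
    have hs1 : s ≤ 1 := by rw [hsdef, show (1:ℝ) = Real.sqrt 1 by simp]; exact Real.sqrt_le_sqrt hp1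
    have ht1 : t ≤ 1 := by rw [htdef, show (1:ℝ) = Real.sqrt 1 by simp]; exact Real.sqrt_le_sqrt hc1
    have hss : s * s = p := Real.mul_self_sqrt hp0
    have htt : t * t = c := Real.mul_self_sqrt hc.le
    have hlogp : Real.log p = 2 * Real.log s := by
      rw [← hss, Real.log_mul hs.ne' hs.ne']; ring
    have hlogc : Real.log c = 2 * Real.log t := by
      rw [← htt, Real.log_mul ht.ne' ht.ne']; ring
    have heq : p * (Real.log (p/c))^2 = 4 * (s * (Real.log s - Real.log t))^2 := by
      rw [Real.log_div hp.ne' hc.ne', hlogp, hlogc, ← hss]; ring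
    have hkey := key_ineq hs hs1 ht ht1
    have hηt : Real.sqrt η ≤ t := Real.sqrt_le_sqrt hηc
    rw [heq]
    calc 4 * (s * (Real.log s - Real.log t))^2
        = 4 * (t * (s * (Real.log s - Real.log t))^2) / t := by
          field_simp <;> ring
      _ ≤ 4 * (t - s)^2 / t := by
          apply (div_le_div_iff_of_pos_right ht).2
          nlinarith [hkey]
      _ ≤ 4 * (t - s)^2 / Real.sqrt η := by
          apply div_le_div_of_nonneg_left (by positivity) hsη hηt
      _ = (4 / Real.sqrt η) * (t - s)^2 := by ring



/-- Lemma 4 (finite representation alphabet): the variance of the log-likelihood-ratio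
statistic `T` is controlled by the decoder-efficiency Hellinger distance. -/
theorem variance_T_le_hellinger
    {𝒳 𝒰 𝒴 : Type*} [Fintype 𝒳] [Fintype 𝒰] [Fintype 𝒴]
    (P : 𝒳 × 𝒴 → ℝ) (hP0 : ∀ z, 0 < P z) (hP1 : ∑ z, P z = 1)
    (q : 𝒳 → 𝒰 → ℝ) (hq0 : ∀ x u, 0 < q x u) (hq1 : ∀ x, ∑ u, q x u = 1)
    (η : ℝ) (hη : η ∈ Set.Ioc (0 : ℝ) 1)
    (Qh : 𝒰 → 𝒴 → ℝ) (hQh0 : ∀ u y, η ≤ Qh u y) (hQh1 : ∀ u, ∑ y, Qh u y = 1) :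
    let qU : 𝒰 → ℝ := fun u => ∑ z : 𝒳 × 𝒴, P z * q z.1 u;
    let QD : 𝒴 → 𝒰 → ℝ := fun y u => (∑ x, P (x, y) * q x u) / qU u;
    let T : 𝒳 → 𝒴 → ℝ := fun x y => ∑ u, q x u * Real.log (QD y u / Qh u y);
    ∑ z : 𝒳 × 𝒴, P z * (T z.1 z.2) ^ 2 - (∑ z : 𝒳 × 𝒴, P z * T z.1 z.2) ^ 2 ≤
      (8 / Real.sqrt η) *
        ((1 / 2) * ∑ u, qU u * ∑ y, (Real.sqrt (Qh u y) - Real.sqrt (QD y u)) ^ 2) := by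
  intro qU QD T
  obtain ⟨hη0, hη1⟩ := hη
  have hne : Nonempty (𝒳 × 𝒴) := by
    by_contra h
    rw [not_nonempty_iff] at h
    rw [Finset.univ_eq_empty, Finset.sum_empty] at hP1
    norm_num at hP1
  have hqU_pos : ∀ u, 0 < qU u := fun u =>
    Finset.sum_pos (fun z _ => mul_pos (hP0 z) (hq0 z.1 u)) Finset.univ_nonempty
  have hQDmul : ∀ u y, qU u * QD y u = ∑ x, P (x, y) * q x u := by
    intro u y
    show qU u * ((∑ x, P (x, y) * q x u) / qU u) = _
    rw [mul_comm, div_mul_cancel₀ _ (hqU_pos u).ne']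
  have hQD0 : ∀ u y, 0 ≤ QD y u := fun u y =>
    div_nonneg (Finset.sum_nonneg fun x _ => (mul_pos (hP0 _) (hq0 _ _)).le) (hqU_pos u).le
  have hQD1 : ∀ u y, QD y u ≤ 1 := by
    intro u y
    show (∑ x, P (x, y) * q x u) / qU u ≤ 1
    rw [div_le_one (hqU_pos u)]
    show _ ≤ ∑ z : 𝒳 × 𝒴, P z * q z.1 u
    rw [Fintype.sum_prod_type_right]
    exact Finset.single_le_sum (f := fun y' => ∑ x, P (x, y') * q x u)
      (fun i _ => Finset.sum_nonneg fun x _ => (mul_pos (hP0 _) (hq0 _ _)).le)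
      (Finset.mem_univ y)
  have hQh_le1 : ∀ u y, Qh u y ≤ 1 := by
    intro u y
    rw [← hQh1 u]
    exact Finset.single_le_sum (fun i _ => le_trans hη0.le (hQh0 u i)) (Finset.mem_univ y)
  -- Jensen step
  have hJensen : ∀ x y, (T x y)^2 ≤ ∑ u, q x u * (Real.log (QD y u / Qh u y))^2 := by
    intro x y
    have e : (T x y)^2 = (∑ u, Real.sqrt (q x u) *
        (Real.sqrt (q x u) * Real.log (QD y u / Qh u y)))^2 := by
      show (∑ u, q x u * Real.log (QD y u / Qh u y))^2 = _
      congr 1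
      refine Finset.sum_congr rfl fun u _ => ?_
      rw [← mul_assoc, Real.mul_self_sqrt (hq0 x u).le]
    rw [e]
    refine le_trans (Finset.sum_mul_sq_le_sq_mul_sq Finset.univ _ _) ?_
    have e1 : ∑ u, Real.sqrt (q x u)^2 = 1 := by
      rw [← hq1 x]
      exact Finset.sum_congr rfl fun u _ => Real.sq_sqrt (hq0 x u).le
    rw [e1, one_mul]
    refine le_of_eq (Finset.sum_congr rfl fun u _ => ?_)
    rw [mul_pow, Real.sq_sqrt (hq0 x u).le]
  -- main chain
  calc ∑ z : 𝒳 × 𝒴, P z * (T z.1 z.2) ^ 2 - (∑ z : 𝒳 × 𝒴, P z * T z.1 z.2) ^ 2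
      ≤ ∑ z : 𝒳 × 𝒴, P z * (T z.1 z.2) ^ 2 := sub_le_self _ (sq_nonneg _)
    _ ≤ ∑ z : 𝒳 × 𝒴, P z * ∑ u, q z.1 u * (Real.log (QD z.2 u / Qh u z.2))^2 :=
        Finset.sum_le_sum fun z _ =>
          mul_le_mul_of_nonneg_left (hJensen z.1 z.2) (hP0 z).le
    _ = ∑ u, ∑ z : 𝒳 × 𝒴, P z * (q z.1 u * (Real.log (QD z.2 u / Qh u z.2))^2) := by
        simp_rw [Finset.mul_sum]
        rw [Finset.sum_comm]
    _ = ∑ u, ∑ y, (∑ x, P (x, y) * q x u) * (Real.log (QD y u / Qh u y))^2 := by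
        refine Finset.sum_congr rfl fun u _ => ?_
        rw [Fintype.sum_prod_type_right]
        refine Finset.sum_congr rfl fun y _ => ?_
        rw [Finset.sum_mul]
        exact Finset.sum_congr rfl fun x _ => by ring
    _ = ∑ u, ∑ y, qU u * (QD y u * (Real.log (QD y u / Qh u y))^2) := by
        refine Finset.sum_congr rfl fun u _ => Finset.sum_congr rfl fun y _ => ?_
        rw [← hQDmul u y]; ring
    _ ≤ ∑ u, ∑ y, qU u *
        ((4 / Real.sqrt η) * (Real.sqrt (Qh u y) - Real.sqrt (QD y u))^2) := by
        refine Finset.sum_le_sum fun u _ => Finset.sum_le_sum fun y _ => ?_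
        refine mul_le_mul_of_nonneg_left ?_ (hqU_pos u).le
        exact core_ineq (hQD0 u y) (hQD1 u y) hη0 (hQh0 u y) (hQh_le1 u y)
    _ = ∑ u, (4 / Real.sqrt η) *
        (qU u * ∑ y, (Real.sqrt (Qh u y) - Real.sqrt (QD y u)) ^ 2) := by
        refine Finset.sum_congr rfl fun u _ => ?_
        rw [Finset.mul_sum, Finset.mul_sum]
        exact Finset.sum_congr rfl fun y _ => by ring
    _ = (8 / Real.sqrt η) *
        ((1 / 2) * ∑ u, qU u * ∑ y, (Real.sqrt (Qh u y) - Real.sqrt (QD y u)) ^ 2) := by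
        rw [← Finset.mul_sum]
        ring
end

section
/- Let 𝒳 and 𝒰 be nonempty finite types with |𝒳| = N, let P be a pmf on 𝒳 with P(x) ≥ p_min > 0 for all x, and let q : 𝒳 → 𝒰 → ℝ be an encoder kernel with q(u|x) > 0 for all u, x. Define q_U(u) = ∑_x P(x) q(u|x) and the mutual information I = ∑_x ∑_u P(x) q(u|x) log(q(u|x)/q_U(u)). Then ∑_u √(∑_x (q(u|x) − m_u)²) ≤ (√2 / p_min) · √I, where m_u = (1/N)∑_x q(u|x). -/
open Finset Real

private lemma aux_g_deriv {t : ℝ} (ht : 0 < t) :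
    HasDerivAt (fun s : ℝ => (s + 1) * Real.log s - 2 * (s - 1))
      (Real.log t + 1 / t - 1) t := by
  have h1 : HasDerivAt (fun s : ℝ => (s + 1) * Real.log s)
      (1 * Real.log t + (t + 1) * t⁻¹) t :=
    ((hasDerivAt_id t).add_const 1).mul (Real.hasDerivAt_log ht.ne')
  have h2 : HasDerivAt (fun s : ℝ => 2 * (s - 1)) (2 * 1) t :=
    ((hasDerivAt_id t).sub_const 1).const_mul 2
  refine (h1.sub h2).congr_deriv ?_
  rw [add_mul, mul_inv_cancel₀ ht.ne']
  ring

private lemma aux_g_mono : MonotoneOn (fun s : ℝ => (s + 1) * Real.log s - 2 * (s - 1))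
    (Set.Ioi (0 : ℝ)) := by
  apply monotoneOn_of_hasDerivWithinAt_nonneg (convex_Ioi 0)
      (f' := fun t => Real.log t + 1 / t - 1)
  · apply ContinuousOn.sub
    · exact (continuousOn_id.add continuousOn_const).mul
        (Real.continuousOn_log.mono (fun x hx => hx.ne'))
    · fun_prop
  · intro x hx
    rw [interior_Ioi] at hx
    exact (aux_g_deriv hx).hasDerivWithinAt
  · intro x hx
    rw [interior_Ioi] at hx
    have h := Real.log_le_sub_one_of_pos (inv_pos.mpr hx)
    rw [Real.log_inv] at h
    have : (x : ℝ)⁻¹ = 1 / x := (one_div x).symm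
    linarith [h]

private lemma aux_g_nonneg {t : ℝ} (ht : 1 ≤ t) :
    0 ≤ (t + 1) * Real.log t - 2 * (t - 1) := by
  have h := aux_g_mono (Set.mem_Ioi.mpr one_pos) (Set.mem_Ioi.mpr (lt_of_lt_of_le one_pos ht)) ht
  simpa using h

private lemma aux_g_nonpos {t : ℝ} (ht0 : 0 < t) (ht : t ≤ 1) :
    (t + 1) * Real.log t - 2 * (t - 1) ≤ 0 := by
  have h := aux_g_mono (Set.mem_Ioi.mpr ht0) (Set.mem_Ioi.mpr one_pos) ht
  simpa using h

private lemma aux_f_deriv {t : ℝ} (ht : 0 < t) :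
    HasDerivAt (fun s : ℝ => (2 * s + 4) * (s * Real.log s - s + 1) - 3 * (s - 1) ^ 2)
      (4 * ((t + 1) * Real.log t - 2 * (t - 1))) t := by
  have hlog : HasDerivAt (fun s : ℝ => s * Real.log s) (1 * Real.log t + t * t⁻¹) t :=
    (hasDerivAt_id t).mul (Real.hasDerivAt_log ht.ne')
  have h1 : HasDerivAt (fun s : ℝ => s * Real.log s - s + 1) (1 * Real.log t + t * t⁻¹ - 1) t :=
    (hlog.sub (hasDerivAt_id t)).add_const 1
  have h2 : HasDerivAt (fun s : ℝ => 2 * s + 4) 2 t := by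
    simpa using ((hasDerivAt_id t).const_mul 2).add_const 4
  have h3 : HasDerivAt (fun s : ℝ => 3 * (s - 1) ^ 2) (3 * (2 * (t - 1) ^ 1 * 1)) t :=
    (((hasDerivAt_id t).sub_const 1).pow 2).const_mul 3
  have := (h2.mul h1).sub h3
  refine this.congr_deriv ?_
  have : t * t⁻¹ = 1 := mul_inv_cancel₀ ht.ne'
  rw [this]
  ring

private lemma aux_f_nonneg {t : ℝ} (ht : 0 < t) :
    0 ≤ (2 * t + 4) * (t * Real.log t - t + 1) - 3 * (t - 1) ^ 2 := by
  set f : ℝ → ℝ := fun s => (2 * s + 4) * (s * Real.log s - s + 1) - 3 * (s - 1) ^ 2 with hf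
  have hf1 : f 1 = 0 := by simp [hf]
  have hcont : ∀ D : Set ℝ, D ⊆ Set.Ioi 0 → ContinuousOn f D := by
    intro D hD
    apply ContinuousOn.sub
    · apply ContinuousOn.mul
      · fun_prop
      · exact ((ContinuousOn.mul continuousOn_id
          (Real.continuousOn_log.mono (fun x hx => (hD hx).ne'))).sub
            continuousOn_id).add continuousOn_const
    · fun_prop
  rcases le_total 1 t with h1 | h1
  · have hmono : MonotoneOn f (Set.Ici (1 : ℝ)) := by
      apply monotoneOn_of_hasDerivWithinAt_nonneg (convex_Ici 1)
          (f' := fun s => 4 * ((s + 1) * Real.log s - 2 * (s - 1)))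
      · exact hcont _ (fun x hx => Set.mem_Ioi.mpr (lt_of_lt_of_le one_pos hx))
      · intro x hx
        rw [interior_Ici] at hx
        exact (aux_f_deriv (lt_trans one_pos hx)).hasDerivWithinAt
      · intro x hx
        rw [interior_Ici] at hx
        have := aux_g_nonneg (le_of_lt hx)
        linarith
    have := hmono Set.self_mem_Ici (Set.mem_Ici.mpr h1) h1
    rw [hf1] at this
    exact this
  · have hanti : AntitoneOn f (Set.Ioc (0 : ℝ) 1) := by
      apply antitoneOn_of_hasDerivWithinAt_nonpos (convex_Ioc 0 1)
          (f' := fun s => 4 * ((s + 1) * Real.log s - 2 * (s - 1)))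
      · exact hcont _ (fun x hx => hx.1)
      · intro x hx
        rw [interior_Ioc] at hx
        exact (aux_f_deriv hx.1).hasDerivWithinAt
      · intro x hx
        rw [interior_Ioc] at hx
        have := aux_g_nonpos hx.1 (le_of_lt hx.2)
        linarith
    have := hanti (Set.mem_Ioc.mpr ⟨ht, h1⟩) (Set.mem_Ioc.mpr ⟨one_pos, le_refl 1⟩) h1
    rw [hf1] at this
    exact this

/-- Pointwise inequality behind Pinsker: `3(a-b)² ≤ (2a+4b)(a log(a/b) - a + b)`. -/
private lemma pinsker_pointwise {a b : ℝ} (ha : 0 < a) (hb : 0 < b) :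
    3 * (a - b) ^ 2 ≤ (2 * a + 4 * b) * (a * Real.log (a / b) - a + b) := by
  have ht : 0 < a / b := div_pos ha hb
  have hf := aux_f_nonneg ht
  have hkey : (2 * a + 4 * b) * (a * Real.log (a / b) - a + b) - 3 * (a - b) ^ 2
      = b ^ 2 * ((2 * (a / b) + 4) * ((a / b) * Real.log (a / b) - a / b + 1)
          - 3 * (a / b - 1) ^ 2) := by
    field_simp
  nlinarith [mul_le_mul_of_nonneg_left hf (sq_nonneg b)]

/-- each KL summand with the linear correction is nonneg -/
private lemma kl_term_nonneg {a b : ℝ} (ha : 0 < a) (hb : 0 < b) :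
    0 ≤ a * Real.log (a / b) - a + b := by
  have h := Real.log_le_sub_one_of_pos (div_pos hb ha)
  have hba : Real.log (b / a) = - Real.log (a / b) := by
    rw [← Real.log_inv, inv_div]
  rw [hba] at h
  have h2 : a * (- Real.log (a / b)) ≤ a * (b / a - 1) := by
    exact mul_le_mul_of_nonneg_left h (le_of_lt ha)
  have h3 : a * (b / a - 1) = b - a := by field_simp
  nlinarith

/-- Pinsker's inequality for finite pmfs. -/
private lemma pinsker_finite {𝒰 : Type*} [Fintype 𝒰] (p r : 𝒰 → ℝ)
    (hp : ∀ u, 0 < p u) (hr : ∀ u, 0 < r u)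
    (hp1 : ∑ u, p u = 1) (hr1 : ∑ u, r u = 1) :
    ∑ u, |p u - r u| ≤ Real.sqrt (2 * ∑ u, p u * Real.log (p u / r u)) := by
  set h : 𝒰 → ℝ := fun u => p u * Real.log (p u / r u) - p u + r u with hh
  have hh0 : ∀ u, 0 ≤ h u := fun u => kl_term_nonneg (hp u) (hr u)
  have hsum : ∑ u, h u = ∑ u, p u * Real.log (p u / r u) := by
    simp [hh, Finset.sum_add_distrib, Finset.sum_sub_distrib, hp1, hr1]
  have hcs : ∑ u, Real.sqrt ((2 * p u + 4 * r u) / 3) * Real.sqrt (h u) ≤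
      Real.sqrt (∑ u, (2 * p u + 4 * r u) / 3) * Real.sqrt (∑ u, h u) := by
    apply Real.sum_sqrt_mul_sqrt_le
    · intro u
      have := (hp u).le; have := (hr u).le
      positivity
    · exact hh0
  have hterm : ∀ u, |p u - r u| ≤ Real.sqrt ((2 * p u + 4 * r u) / 3) * Real.sqrt (h u) := by
    intro u
    have hnn : (0:ℝ) ≤ (2 * p u + 4 * r u) / 3 := by
      have := (hp u).le; have := (hr u).le; positivity
    rw [← Real.sqrt_mul hnn (h u), ← Real.sqrt_sq_eq_abs]
    apply Real.sqrt_le_sqrt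
    have := pinsker_pointwise (hp u) (hr u)
    have h3 : (0:ℝ) < 3 := by norm_num
    rw [div_mul_eq_mul_div, le_div_iff₀ h3]
    calc (p u - r u) ^ 2 * 3 = 3 * (p u - r u) ^ 2 := by ring
    _ ≤ (2 * p u + 4 * r u) * (p u * Real.log (p u / r u) - p u + r u) := this
  have hS : ∑ u, (2 * p u + 4 * r u) / 3 = 2 := by
    rw [← Finset.sum_div, Finset.sum_add_distrib, ← Finset.mul_sum, ← Finset.mul_sum, hp1, hr1]
    norm_num
  calc ∑ u, |p u - r u| ≤ ∑ u, Real.sqrt ((2 * p u + 4 * r u) / 3) * Real.sqrt (h u) :=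
        Finset.sum_le_sum (fun u _ => hterm u)
    _ ≤ Real.sqrt (∑ u, (2 * p u + 4 * r u) / 3) * Real.sqrt (∑ u, h u) := hcs
    _ = Real.sqrt (2 * ∑ u, p u * Real.log (p u / r u)) := by
        rw [hS, hsum, ← Real.sqrt_mul (by norm_num)]

/-- the mean minimizes the sum of squared deviations -/
private lemma mean_min_sq {𝒳 : Type*} [Fintype 𝒳] [Nonempty 𝒳] (a : 𝒳 → ℝ) (c : ℝ) :
    ∑ x, (a x - (1 / (Fintype.card 𝒳 : ℝ)) * ∑ x', a x') ^ 2 ≤ ∑ x, (a x - c) ^ 2 := by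
  set N : ℝ := (Fintype.card 𝒳 : ℝ) with hN
  have hNpos : 0 < N := by
    simp only [hN]
    exact_mod_cast Fintype.card_pos
  set μ : ℝ := (1 / N) * ∑ x', a x' with hμ
  have hsa : ∑ x, a x = N * μ := by
    rw [hμ]; field_simp
  have key : ∑ x, ((a x - c) ^ 2 - (a x - μ) ^ 2) = N * (μ - c) ^ 2 := by
    have : ∀ x, (a x - c) ^ 2 - (a x - μ) ^ 2 = (μ - c) * (2 * a x) - (μ - c) * (c + μ) := by
      intro x; ring
    rw [Finset.sum_congr rfl (fun x _ => this x), Finset.sum_sub_distrib,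
      ← Finset.mul_sum, Finset.sum_const, Finset.card_univ]
    rw [← Finset.mul_sum, hsa]
    push_cast [hN]
    ring
  have h2 : 0 ≤ N * (μ - c) ^ 2 := by positivity
  rw [Finset.sum_sub_distrib] at key
  linarith

private lemma sqrt_sum_sq_le_sum_abs {𝒳 : Type*} [Fintype 𝒳] (d : 𝒳 → ℝ) :
    Real.sqrt (∑ x, d x ^ 2) ≤ ∑ x, |d x| := by
  rw [← Real.sqrt_sq (Finset.sum_nonneg (fun x _ => abs_nonneg (d x)))]
  apply Real.sqrt_le_sqrt
  calc ∑ x, d x ^ 2 = ∑ x, |d x| ^ 2 := by simp [sq_abs]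
    _ ≤ (∑ x, |d x|) ^ 2 := Finset.sum_sq_le_sq_sum_of_nonneg (fun x _ => abs_nonneg (d x))

/-- Lemma 5: sum over representation values of the square roots of the empirical
variances of the encoder columns is controlled by the mutual information. -/
theorem sum_sqrt_empVar_le_mutualInfo
    {𝒳 𝒰 : Type*} [Fintype 𝒳] [Nonempty 𝒳] [Fintype 𝒰] [Nonempty 𝒰]
    (P : 𝒳 → ℝ) (p_min : ℝ) (hpmin : 0 < p_min)
    (hP0 : ∀ x, p_min ≤ P x) (hP1 : ∑ x, P x = 1)
    (q : 𝒳 → 𝒰 → ℝ) (hq0 : ∀ x u, 0 < q x u) (hq1 : ∀ x, ∑ u, q x u = 1) :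
    let N : ℕ := Fintype.card 𝒳;
    let qU : 𝒰 → ℝ := fun u => ∑ x, P x * q x u;
    let I : ℝ := ∑ x, ∑ u, P x * q x u * Real.log (q x u / qU u);
    ∑ u, Real.sqrt (∑ x, (q x u - (1 / (N : ℝ)) * ∑ x', q x' u) ^ 2) ≤
      (Real.sqrt 2 / p_min) * Real.sqrt I := by
  intro N qU I
  have hPpos : ∀ x, 0 < P x := fun x => lt_of_lt_of_le hpmin (hP0 x)
  have hqU : ∀ u, 0 < qU u := by
    intro u
    apply Finset.sum_pos (fun x _ => mul_pos (hPpos x) (hq0 x u)) Finset.univ_nonempty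
  have hqU1 : ∑ u, qU u = 1 := by
    show ∑ u, ∑ x, P x * q x u = 1
    rw [Finset.sum_comm]
    calc ∑ x, ∑ u, P x * q x u = ∑ x, P x * ∑ u, q x u := by
          simp [Finset.mul_sum]
      _ = 1 := by simp [hq1, hP1]
  set KL : 𝒳 → ℝ := fun x => ∑ u, q x u * Real.log (q x u / qU u) with hKL
  have hKL0 : ∀ x, 0 ≤ KL x := by
    intro x
    have h1 : ∑ u, (q x u * Real.log (q x u / qU u) - q x u + qU u) = KL x := by
      simp [hKL, Finset.sum_add_distrib, Finset.sum_sub_distrib, hq1 x, hqU1]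
    rw [← h1]
    exact Finset.sum_nonneg (fun u _ => kl_term_nonneg (hq0 x u) (hqU u))
  have hI : I = ∑ x, P x * KL x := by
    show (∑ x, ∑ u, P x * q x u * Real.log (q x u / qU u)) = _
    apply Finset.sum_congr rfl
    intro x _
    rw [hKL, Finset.mul_sum]
    apply Finset.sum_congr rfl
    intro u _
    ring
  have hInn : 0 ≤ I := by
    rw [hI]
    exact Finset.sum_nonneg (fun x _ => mul_nonneg (hPpos x).le (hKL0 x))
  calc ∑ u, Real.sqrt (∑ x, (q x u - (1 / (N : ℝ)) * ∑ x', q x' u) ^ 2)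
      ≤ ∑ u, Real.sqrt (∑ x, (q x u - qU u) ^ 2) := by
        apply Finset.sum_le_sum
        intro u _
        exact Real.sqrt_le_sqrt (mean_min_sq (fun x => q x u) (qU u))
    _ ≤ ∑ u, ∑ x, |q x u - qU u| := by
        apply Finset.sum_le_sum
        intro u _
        exact sqrt_sum_sq_le_sum_abs (fun x => q x u - qU u)
    _ = ∑ x, ∑ u, |q x u - qU u| := Finset.sum_comm
    _ ≤ ∑ x, Real.sqrt (2 * KL x) := by
        apply Finset.sum_le_sum
        intro x _
        exact pinsker_finite (fun u => q x u) qU (hq0 x) hqU (hq1 x) hqU1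
    _ ≤ ∑ x, (P x / p_min) * Real.sqrt (2 * KL x) := by
        apply Finset.sum_le_sum
        intro x _
        have h1 : (1:ℝ) ≤ P x / p_min := (one_le_div hpmin).mpr (hP0 x)
        nlinarith [Real.sqrt_nonneg (2 * KL x)]
    _ = (1 / p_min) * ∑ x, P x * Real.sqrt (2 * KL x) := by
        rw [Finset.mul_sum]
        apply Finset.sum_congr rfl
        intro x _
        ring
    _ ≤ (1 / p_min) * Real.sqrt (2 * I) := by
        apply mul_le_mul_of_nonneg_left _ (div_nonneg zero_le_one hpmin.le)
        have hcs : ∑ x, Real.sqrt (P x) * Real.sqrt (P x * (2 * KL x)) ≤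
            Real.sqrt (∑ x, P x) * Real.sqrt (∑ x, P x * (2 * KL x)) := by
          apply Real.sum_sqrt_mul_sqrt_le
          · exact fun x => (hPpos x).le
          · exact fun x => mul_nonneg (hPpos x).le (mul_nonneg (by norm_num) (hKL0 x))
        have heq : ∀ x, Real.sqrt (P x) * Real.sqrt (P x * (2 * KL x))
            = P x * Real.sqrt (2 * KL x) := by
          intro x
          rw [Real.sqrt_mul (hPpos x).le, ← mul_assoc, Real.mul_self_sqrt (hPpos x).le]
        have heq2 : ∑ x, P x * (2 * KL x) = 2 * I := by
          rw [hI, Finset.mul_sum]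
          apply Finset.sum_congr rfl
          intro x _
          ring
        calc ∑ x, P x * Real.sqrt (2 * KL x)
            = ∑ x, Real.sqrt (P x) * Real.sqrt (P x * (2 * KL x)) := by
              exact (Finset.sum_congr rfl (fun x _ => (heq x).symm))
          _ ≤ Real.sqrt (∑ x, P x) * Real.sqrt (∑ x, P x * (2 * KL x)) := hcs
          _ = Real.sqrt (2 * I) := by rw [hP1, heq2, Real.sqrt_one, one_mul]
    _ = (Real.sqrt 2 / p_min) * Real.sqrt I := by
        rw [Real.sqrt_mul (by norm_num : (0:ℝ) ≤ 2)]
        ring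
end

section
/- Let 𝒳 be a finite type, let J be a finite index set, and for each j ∈ J let 𝒰_j be a finite type; set 𝒰 = ∏_{j∈J} 𝒰_j. Let p be a pmf on 𝒳. For each j let q_j : 𝒳 → 𝒰_j → ℝ be an encoder kernel with q_j(u_j|x) > 0, and let q̃_j be a pmf on 𝒰_j with q̃_j(u_j) > 0 for all u_j. Define the conditionally independent joint encoder q(u|x) = ∏_j q_j(u_j|x) for u = (u_j)_j, the marginal q_U(u) = ∑_x p(x) q(u|x), and the mutual information I = ∑_x ∑_u p(x) q(u|x) log(q(u|x)/q_U(u)). Then I ≤ ∑_{j∈J} ∑_x p(x) ∑_{u_j} q_j(u_j|x) log(q_j(u_j|x)/q̃_j(u_j)); i.e., the mutual information between the input and the vector of representations is bounded by the sum over coordinates of the expected KL divergences from the per-coordinate priors. -/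
/-- Gibbs' inequality. -/
lemma gibbs {β : Type*} [Fintype β] (a b : β → ℝ)
    (ha : ∀ u, 0 < a u) (hb : ∀ u, 0 < b u)
    (hsa : ∑ u, a u = 1) (hsb : ∑ u, b u = 1) :
    0 ≤ ∑ u, a u * Real.log (a u / b u) := by
  have key : ∀ u, a u - b u ≤ a u * Real.log (a u / b u) := by
    intro u
    have h := Real.log_le_sub_one_of_pos (div_pos (hb u) (ha u))
    rw [Real.log_div (hb u).ne' (ha u).ne'] at h
    rw [Real.log_div (ha u).ne' (hb u).ne']
    have h2 : a u * (b u / a u - 1) = b u - a u := by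
      rw [mul_sub, mul_div_cancel₀ _ (ha u).ne', mul_one]
    nlinarith [mul_le_mul_of_nonneg_left h (ha u).le]
  calc (0:ℝ) = ∑ u, (a u - b u) := by rw [Finset.sum_sub_distrib, hsa, hsb]; ring
    _ ≤ _ := Finset.sum_le_sum fun u _ => key u

/-- Coordinatewise variational bound (Eq. (9) of the paper): for a conditionally
independent joint encoder, the mutual information between the input and the vector of
representations is bounded by the sum over coordinates of the expected KL divergences
from the per-coordinate priors. -/
theorem mutualInfo_coordinatewise_bound
    {𝒳 : Type*} [Fintype 𝒳]
    {J : Type*} [Fintype J] [DecidableEq J]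
    {𝒰 : J → Type*} [∀ j, Fintype (𝒰 j)]
    (p : 𝒳 → ℝ) (hp0 : ∀ x, 0 ≤ p x) (hp1 : ∑ x, p x = 1)
    (qj : ∀ j, 𝒳 → 𝒰 j → ℝ)
    (hqj0 : ∀ j x uj, 0 < qj j x uj) (hqj1 : ∀ j x, ∑ uj, qj j x uj = 1)
    (qt : ∀ j, 𝒰 j → ℝ)
    (hqt0 : ∀ j uj, 0 < qt j uj) (hqt1 : ∀ j, ∑ uj, qt j uj = 1) :
    let q : 𝒳 → (∀ j, 𝒰 j) → ℝ := fun x u => ∏ j, qj j x (u j);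
    let qU : (∀ j, 𝒰 j) → ℝ := fun u => ∑ x, p x * q x u;
    let I : ℝ := ∑ x, ∑ u : ∀ j, 𝒰 j, p x * q x u * Real.log (q x u / qU u);
    I ≤ ∑ j, ∑ x, p x * ∑ uj, qj j x uj * Real.log (qj j x uj / qt j uj) := by
  intro q qU I
  classical
  set L : ∀ j, 𝒳 → 𝒰 j → ℝ := fun j x v => Real.log (qj j x v / qt j v) with hLdef
  set qtP : (∀ j, 𝒰 j) → ℝ := fun u => ∏ j, qt j (u j) with hqtPdef
  have hq0 : ∀ x u, 0 < q x u := fun x u => Finset.prod_pos fun j _ => hqj0 j x (u j)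
  have hqtP0 : ∀ u, 0 < qtP u := fun u => Finset.prod_pos fun j _ => hqt0 j (u j)
  have hpx : ∃ x, 0 < p x := by
    by_contra h
    push_neg at h
    have : ∑ x, p x ≤ 0 := Finset.sum_nonpos fun x _ => h x
    linarith
  have hqU0 : ∀ u, 0 < qU u := by
    intro u
    obtain ⟨x0, hx0⟩ := hpx
    exact Finset.sum_pos' (fun x _ => mul_nonneg (hp0 x) (hq0 x u).le)
      ⟨x0, Finset.mem_univ _, mul_pos hx0 (hq0 x0 u)⟩
  have hsumq : ∀ x, ∑ u : ∀ j, 𝒰 j, q x u = 1 := by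
    intro x
    have := (Fintype.prod_sum (fun j v => qj j x v)).symm
    simp only [hqj1, Finset.prod_const_one] at this
    exact this.symm ▸ this
  have hsumqtP : ∑ u : ∀ j, 𝒰 j, qtP u = 1 := by
    have := (Fintype.prod_sum (fun j v => qt j v)).symm
    simp only [hqt1, Finset.prod_const_one] at this
    exact this.symm ▸ this
  have hsumqU : ∑ u : ∀ j, 𝒰 j, qU u = 1 := by
    simp only [qU]
    rw [Finset.sum_comm]
    simp_rw [← Finset.mul_sum]
    simp [hsumq, hp1]
  set T : ℝ := ∑ u : ∀ j, 𝒰 j, qU u * Real.log (qU u / qtP u) with hTdef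
  have hT : 0 ≤ T := gibbs qU qtP hqU0 hqtP0 hsumqU hsumqtP
  set S : ℝ := ∑ x, ∑ u : ∀ j, 𝒰 j, p x * q x u * Real.log (q x u / qtP u) with hSdef
  have hI : I = S - T := by
    have hT2 : ∑ x, ∑ u : ∀ j, 𝒰 j, p x * q x u * Real.log (qU u / qtP u) = T := by
      rw [hTdef, Finset.sum_comm]
      exact Finset.sum_congr rfl fun u _ => by rw [← Finset.sum_mul]
    rw [← hT2, hSdef]
    simp only [I]
    rw [← Finset.sum_sub_distrib]
    refine Finset.sum_congr rfl fun x _ => ?_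
    rw [← Finset.sum_sub_distrib]
    refine Finset.sum_congr rfl fun u _ => ?_
    rw [Real.log_div (hq0 x u).ne' (hqU0 u).ne', Real.log_div (hq0 x u).ne' (hqtP0 u).ne',
      Real.log_div (hqU0 u).ne' (hqtP0 u).ne']
    ring
  have key : ∀ j x, ∑ u : ∀ i, 𝒰 i, q x u * L j x (u j) = ∑ v, qj j x v * L j x v := by
    intro j x
    set h : ∀ i, 𝒰 i → ℝ :=
      Function.update (fun i (v : 𝒰 i) => qj i x v) j (fun v => qj j x v * L j x v) with hhdef
    have h1 : ∀ u : ∀ i, 𝒰 i, q x u * L j x (u j) = ∏ i, h i (u i) := by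
      intro u
      rw [Finset.prod_eq_mul_prod_sdiff_singleton_of_mem (Finset.mem_univ j) (fun i => h i (u i))]
      have h2 : ∏ i ∈ Finset.univ \ {j}, h i (u i)
          = ∏ i ∈ Finset.univ \ {j}, qj i x (u i) := by
        refine Finset.prod_congr rfl fun i hi => ?_
        have : i ≠ j := by simp at hi; exact hi
        rw [hhdef, Function.update_of_ne this]
      rw [h2, hhdef, Function.update_self]
      have h3 : q x u = qj j x (u j) * ∏ i ∈ Finset.univ \ {j}, qj i x (u i) := by
        simp only [q]
        exact Finset.prod_eq_mul_prod_sdiff_singleton_of_mem (Finset.mem_univ j) _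
      rw [h3]; ring
    simp_rw [h1]
    rw [← Fintype.prod_sum h,
      Finset.prod_eq_mul_prod_sdiff_singleton_of_mem (Finset.mem_univ j) (fun i => ∑ v, h i v)]
    have h4 : ∏ i ∈ Finset.univ \ {j}, ∑ v, h i v = 1 := by
      refine Finset.prod_eq_one fun i hi => ?_
      have : i ≠ j := by simp at hi; exact hi
      rw [hhdef, Function.update_of_ne this]
      exact hqj1 i x
    rw [h4, mul_one, hhdef, Function.update_self]
  have hS : S = ∑ j, ∑ x, p x * ∑ v, qj j x v * L j x v := by
    rw [hSdef]
    have step1 : ∀ x u, p x * q x u * Real.log (q x u / qtP u)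
        = ∑ j, p x * (q x u * L j x (u j)) := by
      intro x u
      have hdiv : q x u / qtP u = ∏ j, qj j x (u j) / qt j (u j) :=
        (Finset.prod_div_distrib _ _).symm
      rw [hdiv, Real.log_prod fun j _ => (div_pos (hqj0 j x (u j)) (hqt0 j (u j))).ne',
        Finset.mul_sum]
      exact Finset.sum_congr rfl fun j _ => by simp only [hLdef]; ring
    simp_rw [step1]
    calc ∑ x, ∑ u : ∀ i, 𝒰 i, ∑ j, p x * (q x u * L j x (u j))
        = ∑ x, ∑ j, ∑ u : ∀ i, 𝒰 i, p x * (q x u * L j x (u j)) :=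
          Finset.sum_congr rfl fun x _ => Finset.sum_comm
      _ = ∑ j, ∑ x, ∑ u : ∀ i, 𝒰 i, p x * (q x u * L j x (u j)) := Finset.sum_comm
      _ = ∑ j, ∑ x, p x * ∑ v, qj j x v * L j x v := by
          refine Finset.sum_congr rfl fun j _ => Finset.sum_congr rfl fun x _ => ?_
          rw [← Finset.mul_sum, key j x]
  rw [hI, ← hS] at *
  linarith
end

section
/- Let α be a nonempty finite type, let P be a pmf on α, let n ≥ 1, and let μ be the n-fold product of the probability measure on α induced by P (i.e., the law of n i.i.d. samples from P). For a sample ω = (ω_1,…,ω_n) define the empirical pmf P̂_ω(a) = (1/n)·#{i : ω_i = a}. Then for every δ ∈ (0,1), μ{ω : √(∑_a (P(a) − P̂_ω(a))²) ≤ (1 + √(log(1/δ)))/√n} ≥ 1 − δ. -/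
open MeasureTheory

section McDiarmidAux

open Real Finset

set_option linter.unusedSectionVars false

private lemma mcd_core (p : ℝ) (hp0 : 0 ≤ p) (hp1 : p ≤ 1) (h : ℝ) :
    Real.log (1 - p + p * Real.exp h) ≤ p * h + h ^ 2 / 8 := by
  set D : ℝ → ℝ := fun x => 1 - p + p * Real.exp x with hDdef
  have hD : ∀ x, 0 < D x := by
    intro x
    rcases eq_or_lt_of_le hp0 with h0 | h0
    · simp [hDdef, ← h0]
    · have := Real.exp_pos x
      have : 0 < p * Real.exp x := by positivity
      simp only [hDdef]; nlinarith
  set F : ℝ → ℝ := fun x => x ^ 2 / 8 + p * x - Real.log (D x) with hFdef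
  set F' : ℝ → ℝ := fun x => x / 4 + p - p * Real.exp x / D x with hF'def
  have hDd : ∀ x, HasDerivAt D (p * Real.exp x) x := by
    intro x
    exact ((Real.hasDerivAt_exp x).const_mul p).const_add (1 - p)
  have hF' : ∀ x, HasDerivAt F (F' x) x := by
    intro x
    have hlog : HasDerivAt (fun y => Real.log (D y)) (p * Real.exp x / D x) x :=
      (hDd x).log (hD x).ne'
    have h1 : HasDerivAt (fun y : ℝ => y ^ 2 / 8 + p * y) (x / 4 + p) x := by
      have := ((hasDerivAt_pow 2 x).div_const 8).add ((hasDerivAt_id x).const_mul p)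
      refine this.congr_deriv ?_
      ring
    exact h1.sub hlog
  have hF'' : ∀ x, HasDerivAt F' (1 / 4 - p * Real.exp x * (1 - p) / D x ^ 2) x := by
    intro x
    have hc : HasDerivAt (fun y => p * Real.exp y) (p * Real.exp x) x :=
      (Real.hasDerivAt_exp x).const_mul p
    have hq := hc.div (hDd x) (hD x).ne'
    have h1 : HasDerivAt (fun y : ℝ => y / 4 + p) (1 / 4) x := by
      simpa using (hasDerivAt_id x).div_const 4 |>.add_const p
    have := h1.sub hq
    refine this.congr_deriv ?_
    have : D x = 1 - p + p * Real.exp x := rfl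
    have := (hD x).ne'
    field_simp
    ring
  have hF''nonneg : ∀ x, 0 ≤ 1 / 4 - p * Real.exp x * (1 - p) / D x ^ 2 := by
    intro x
    rw [sub_nonneg, div_le_iff₀ (pow_pos (hD x) 2)]
    have : D x = 1 - p + p * Real.exp x := rfl
    nlinarith [sq_nonneg (1 - p - p * Real.exp x), Real.exp_pos x]
  have hF'mono : Monotone F' :=
    monotone_of_deriv_nonneg (fun x => (hF'' x).differentiableAt)
      (fun x => (hF'' x).deriv ▸ hF''nonneg x)
  have hF'0 : F' 0 = 0 := by
    have : D 0 = 1 := by simp [hDdef]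
    simp [hF'def, this]
  have hF0 : F 0 = 0 := by
    have : D 0 = 1 := by simp [hDdef]
    simp [hFdef, this]
  have hFdiff : Differentiable ℝ F := fun x => (hF' x).differentiableAt
  have hFderiv : ∀ x, deriv F x = F' x := fun x => (hF' x).deriv
  have key : 0 ≤ F h := by
    rcases le_total 0 h with hh | hh
    · have hmono : MonotoneOn F (Set.Ici 0) := by
        apply monotoneOn_of_deriv_nonneg (convex_Ici 0) hFdiff.continuous.continuousOn
          (hFdiff.differentiableOn)
        intro x hx
        rw [hFderiv]
        rw [interior_Ici] at hx
        calc (0:ℝ) = F' 0 := hF'0.symm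
          _ ≤ F' x := hF'mono (le_of_lt hx)
      calc (0:ℝ) = F 0 := hF0.symm
        _ ≤ F h := hmono (Set.mem_Ici.2 le_rfl) (Set.mem_Ici.2 hh) hh
    · have hanti : AntitoneOn F (Set.Iic 0) := by
        apply antitoneOn_of_deriv_nonpos (convex_Iic 0) hFdiff.continuous.continuousOn
          (hFdiff.differentiableOn)
        intro x hx
        rw [hFderiv]
        rw [interior_Iic] at hx
        calc F' x ≤ F' 0 := hF'mono (le_of_lt hx)
          _ = 0 := hF'0
      calc (0:ℝ) = F 0 := hF0.symm
        _ ≤ F h := hanti (Set.mem_Iic.2 hh) (Set.mem_Iic.2 le_rfl) hh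
  have : Real.log (D h) ≤ p * h + h ^ 2 / 8 := by
    have := key
    simp only [hFdef] at this
    linarith
  simpa [hDdef] using this

private lemma exp_chord {A B x : ℝ} (hAB : A < B) (hx1 : A ≤ x) (hx2 : x ≤ B) :
    Real.exp x ≤ ((B - x) * Real.exp A + (x - A) * Real.exp B) / (B - A) := by
  have hBA : 0 < B - A := by linarith
  have h1 : (0:ℝ) ≤ (B - x) / (B - A) := div_nonneg (by linarith) hBA.le
  have h2 : (0:ℝ) ≤ (x - A) / (B - A) := div_nonneg (by linarith) hBA.le
  have h3 : (B - x) / (B - A) + (x - A) / (B - A) = 1 := by field_simp; ring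
  have := convexOn_exp.2 (Set.mem_univ A) (Set.mem_univ B) h1 h2 h3
  simp only [smul_eq_mul] at this
  have hx : (B - x) / (B - A) * A + (x - A) / (B - A) * B = x := by field_simp; ring
  rw [hx] at this
  calc Real.exp x ≤ (B - x) / (B - A) * Real.exp A + (x - A) / (B - A) * Real.exp B := this
    _ = ((B - x) * Real.exp A + (x - A) * Real.exp B) / (B - A) := by ring

private lemma chord_bound {A B : ℝ} (hA : A ≤ 0) (hB : 0 ≤ B) (hAB : A < B) :
    (B * Real.exp A - A * Real.exp B) / (B - A) ≤ Real.exp ((B - A) ^ 2 / 8) := by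
  set h := B - A with hh
  have hhpos : 0 < h := by simp [hh]; linarith
  set q := -A / h with hq
  have hq0 : 0 ≤ q := div_nonneg (by linarith) hhpos.le
  have hq1 : q ≤ 1 := by rw [hq, div_le_one hhpos]; linarith
  have hA' : A = -(q * h) := by rw [hq]; field_simp
  have hB' : B = (1 - q) * h := by
    rw [hq]
    field_simp
    linarith
  have hcore := mcd_core q hq0 hq1 h
  have hexp1 : (1:ℝ) ≤ Real.exp h := by nlinarith [Real.add_one_le_exp h]
  have hD : 0 < 1 - q + q * Real.exp h := by
    nlinarith [mul_le_mul_of_nonneg_left hexp1 hq0]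
  calc (B * Real.exp A - A * Real.exp B) / (B - A)
      = (1 - q) * Real.exp (-(q * h)) + q * Real.exp ((1 - q) * h) := by
        have hden : (1 - q) * h - -(q * h) = h := by ring
        rw [hA', hB', hden, div_eq_iff hhpos.ne']
        ring
    _ = Real.exp (-(q * h)) * (1 - q + q * Real.exp h) := by
        rw [show (1 - q) * h = -(q * h) + h by ring, Real.exp_add]; ring
    _ ≤ Real.exp (-(q * h)) * Real.exp (q * h + h ^ 2 / 8) := by
        apply mul_le_mul_of_nonneg_left _ (Real.exp_pos _).le
        calc 1 - q + q * Real.exp h = Real.exp (Real.log (1 - q + q * Real.exp h)) :=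
              (Real.exp_log hD).symm
          _ ≤ Real.exp (q * h + h ^ 2 / 8) := Real.exp_le_exp.2 hcore
    _ = Real.exp (h ^ 2 / 8) := by rw [← Real.exp_add]; ring_nf
    _ = Real.exp ((B - A) ^ 2 / 8) := by rw [hh]

private lemma hoeff_step {α : Type*} [Fintype α] [Nonempty α]
    (w : α → ℝ) (hw0 : ∀ a, 0 ≤ w a) (hw1 : ∑ a, w a = 1)
    (g : α → ℝ) (c : ℝ) (hc : 0 ≤ c) (hosc : ∀ a b, g a - g b ≤ c) :
    ∑ a, w a * Real.exp (g a - ∑ b, w b * g b) ≤ Real.exp (c ^ 2 / 8) := by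
  obtain ⟨a₀, -, hmin⟩ := Finset.exists_min_image univ g ⟨Classical.arbitrary α, mem_univ _⟩
  obtain ⟨a₁, -, hmax⟩ := Finset.exists_max_image univ g ⟨Classical.arbitrary α, mem_univ _⟩
  set A := g a₀ with hA
  set B := g a₁ with hB
  set μ := ∑ b, w b * g b with hμ
  have hmin' : ∀ a, A ≤ g a := fun a => hmin a (mem_univ a)
  have hmax' : ∀ a, g a ≤ B := fun a => hmax a (mem_univ a)
  have hAB : A ≤ B := hmin' a₁
  have hAμ : A ≤ μ := by
    calc A = ∑ a, w a * A := by rw [← Finset.sum_mul, hw1, one_mul]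
      _ ≤ μ := Finset.sum_le_sum fun a _ => mul_le_mul_of_nonneg_left (hmin' a) (hw0 a)
  have hμB : μ ≤ B := by
    calc μ ≤ ∑ a, w a * B := Finset.sum_le_sum fun a _ => mul_le_mul_of_nonneg_left (hmax' a) (hw0 a)
      _ = B := by rw [← Finset.sum_mul, hw1, one_mul]
  have hBAc : B - A ≤ c := hosc a₁ a₀
  rcases eq_or_lt_of_le hAB with heq | hlt
  · -- constant case
    have hg : ∀ a, g a = A := fun a => le_antisymm (heq ▸ hmax' a) (hmin' a)
    have hμA : μ = A := by
      rw [hμ]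
      calc ∑ b, w b * g b = ∑ b, w b * A := by simp [hg]
        _ = A := by rw [← Finset.sum_mul, hw1, one_mul]
    calc ∑ a, w a * Real.exp (g a - μ) = ∑ a, w a := by simp [hg, hμA]
      _ = 1 := hw1
      _ ≤ Real.exp (c ^ 2 / 8) := Real.one_le_exp (by positivity)
  · have hlt' : A - μ < B - μ := by linarith
    have step1 : ∑ a, w a * Real.exp (g a - μ) ≤
        ∑ a, w a * ((((B - μ) - (g a - μ)) * Real.exp (A - μ) +
          ((g a - μ) - (A - μ)) * Real.exp (B - μ)) / ((B - μ) - (A - μ))) := by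
      apply Finset.sum_le_sum
      intro a _
      exact mul_le_mul_of_nonneg_left
        (exp_chord hlt' (by linarith [hmin' a]) (by linarith [hmax' a])) (hw0 a)
    have step2 : ∑ a, w a * ((((B - μ) - (g a - μ)) * Real.exp (A - μ) +
          ((g a - μ) - (A - μ)) * Real.exp (B - μ)) / ((B - μ) - (A - μ))) =
        ((B - μ) * Real.exp (A - μ) - (A - μ) * Real.exp (B - μ)) / (B - A) := by
      have hre : ∀ a, w a * ((((B - μ) - (g a - μ)) * Real.exp (A - μ) +
          ((g a - μ) - (A - μ)) * Real.exp (B - μ)) / ((B - μ) - (A - μ))) =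
          ((w a * B - w a * g a) * Real.exp (A - μ) +
           (w a * g a - w a * A) * Real.exp (B - μ)) / (B - A) := by
        intro a
        rw [show (B - μ) - (A - μ) = B - A by ring]
        field_simp
        ring
      rw [Finset.sum_congr rfl fun a _ => hre a, ← Finset.sum_div]
      congr 1
      rw [Finset.sum_add_distrib, ← Finset.sum_mul, ← Finset.sum_mul]
      have e1 : ∑ a, (w a * B - w a * g a) = B - μ := by
        rw [Finset.sum_sub_distrib, ← Finset.sum_mul, hw1, one_mul, hμ]
      have e2 : ∑ a, (w a * g a - w a * A) = μ - A := by
        rw [Finset.sum_sub_distrib, ← Finset.sum_mul, hw1, one_mul, hμ]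
      rw [e1, e2]; ring
    have step3 : ((B - μ) * Real.exp (A - μ) - (A - μ) * Real.exp (B - μ)) / (B - A) ≤
        Real.exp ((B - A) ^ 2 / 8) := by
      have := chord_bound (A := A - μ) (B := B - μ) (by linarith) (by linarith) hlt'
      rw [show (B - μ) - (A - μ) = B - A by ring] at this
      exact this
    calc ∑ a, w a * Real.exp (g a - μ) ≤ _ := step1
      _ = _ := step2
      _ ≤ Real.exp ((B - A) ^ 2 / 8) := step3
      _ ≤ Real.exp (c ^ 2 / 8) := by
        apply Real.exp_le_exp.2
        have h1 : 0 ≤ B - A := by linarith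
        nlinarith

variable {α : Type*} [Fintype α] [Nonempty α] [DecidableEq α]
/-- expectation with respect to the `n`-fold product of weights `w` -/
private def Ex (w : α → ℝ) (n : ℕ) (f : (Fin n → α) → ℝ) : ℝ :=
  ∑ ω : Fin n → α, (∏ i, w (ω i)) * f ω

private lemma Ex_const (w : α → ℝ) (hw1 : ∑ a, w a = 1) (n : ℕ) (k : ℝ) :
    Ex w n (fun _ => k) = k := by
  rw [Ex, ← Finset.sum_mul]
  have : ∑ ω : Fin n → α, ∏ i, w (ω i) = 1 := by
    rw [← Fintype.piFinset_univ, ← Finset.prod_univ_sum]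
    simp [hw1]
  rw [this, one_mul]

private lemma Ex_add (w : α → ℝ) (n : ℕ) (f g : (Fin n → α) → ℝ) :
    Ex w n (fun ω => f ω + g ω) = Ex w n f + Ex w n g := by
  simp [Ex, mul_add, Finset.sum_add_distrib]

private lemma Ex_smul (w : α → ℝ) (n : ℕ) (k : ℝ) (f : (Fin n → α) → ℝ) :
    Ex w n (fun ω => k * f ω) = k * Ex w n f := by
  simp [Ex, Finset.mul_sum]; congr 1; ext ω; ring

private lemma Ex_mono (w : α → ℝ) (hw0 : ∀ a, 0 ≤ w a) (n : ℕ) {f g : (Fin n → α) → ℝ}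
    (h : ∀ ω, f ω ≤ g ω) : Ex w n f ≤ Ex w n g := by
  apply Finset.sum_le_sum
  intro ω _
  exact mul_le_mul_of_nonneg_left (h ω) (Finset.prod_nonneg fun i _ => hw0 (ω i))

private lemma Ex_succ (w : α → ℝ) (n : ℕ) (f : (Fin (n + 1) → α) → ℝ) :
    Ex w (n + 1) f = ∑ a, w a * Ex w n (fun ω => f (Fin.cons a ω)) := by
  rw [Ex]
  rw [← (Fin.consEquiv (fun _ : Fin (n + 1) => α)).sum_comp (fun ω => (∏ i, w (ω i)) * f ω)]
  rw [Fintype.sum_prod_type]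
  congr 1; ext a
  rw [Ex, Finset.mul_sum]
  congr 1; ext ω
  have hp : ∏ i : Fin (n + 1), w ((Fin.cons a ω : Fin (n + 1) → α) i) = w a * ∏ i : Fin n, w (ω i) := by
    rw [Fin.prod_univ_succ]; simp
  have he : (Fin.consEquiv fun _ : Fin (n+1) => α) (a, ω) = Fin.cons a ω := rfl
  rw [he, hp]
  ring

private lemma mgf_bound (w : α → ℝ) (hw0 : ∀ a, 0 ≤ w a) (hw1 : ∑ a, w a = 1)
    (c : ℝ) (hc : 0 ≤ c) :
    ∀ (n : ℕ) (f : (Fin n → α) → ℝ),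
      (∀ (ω : Fin n → α) (i : Fin n) (b : α), f (Function.update ω i b) - f ω ≤ c) →
      Ex w n (fun ω => Real.exp (f ω - Ex w n f)) ≤ Real.exp (n * c ^ 2 / 8) := by
  intro n
  induction n with
  | zero =>
    intro f _
    have : Ex w 0 (fun ω => Real.exp (f ω - Ex w 0 f)) = Ex w 0 (fun _ => Real.exp (f default - Ex w 0 f)) := by
      congr 1; ext ω; rw [Subsingleton.elim ω default]
    rw [this, Ex_const w hw1]
    have : Ex w 0 f = f default := by
      rw [show f = (fun _ : Fin 0 → α => f default) from funext fun ω => by rw [Subsingleton.elim ω default]]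
      exact Ex_const w hw1 0 _
    rw [this]
    simp
  | succ n ih =>
    intro f hf
    set g : α → ℝ := fun a => Ex w n (fun ω => f (Fin.cons a ω)) with hg
    have hm : Ex w (n + 1) f = ∑ a, w a * g a := Ex_succ w n f
    set m := Ex w (n + 1) f with hmdef
    -- each section has bounded differences
    have hsec : ∀ a : α, ∀ (ω : Fin n → α) (i : Fin n) (b : α),
        f (Fin.cons a (Function.update ω i b)) - f (Fin.cons a ω) ≤ c := by
      intro a ω i b
      rw [Fin.cons_update]
      exact hf (Fin.cons a ω) i.succ b
    -- oscillation of g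
    have hosc : ∀ a b : α, g a - g b ≤ c := by
      intro a b
      have : ∀ ω : Fin n → α, f (Fin.cons a ω) - f (Fin.cons b ω) ≤ c := by
        intro ω
        have := hf (Fin.cons b ω) 0 a
        rwa [Fin.update_cons_zero] at this
      calc g a - g b = Ex w n (fun ω => f (Fin.cons a ω) - f (Fin.cons b ω)) := by
            rw [hg]
            simp only [sub_eq_add_neg]
            rw [show (fun ω => f (Fin.cons a ω) + -(f (Fin.cons b ω))) =
              (fun ω => f (Fin.cons a ω) + (-1) * f (Fin.cons b ω)) from funext fun ω => by ring]
            rw [Ex_add, Ex_smul]; ring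
        _ ≤ Ex w n (fun _ => c) := Ex_mono w hw0 n this
        _ = c := Ex_const w hw1 n c
    calc Ex w (n + 1) (fun ω => Real.exp (f ω - m))
        = ∑ a, w a * Ex w n (fun ω => Real.exp (f (Fin.cons a ω) - m)) := Ex_succ w n _
      _ = ∑ a, w a * (Real.exp (g a - m) * Ex w n (fun ω => Real.exp (f (Fin.cons a ω) - g a))) := by
          congr 1; ext a
          congr 1
          rw [← Ex_smul]
          congr 1; ext ω
          rw [← Real.exp_add]; ring_nf
      _ ≤ ∑ a, w a * (Real.exp (g a - m) * Real.exp (n * c ^ 2 / 8)) := by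
          apply Finset.sum_le_sum
          intro a _
          apply mul_le_mul_of_nonneg_left _ (hw0 a)
          exact mul_le_mul_of_nonneg_left (ih _ (hsec a)) (Real.exp_pos _).le
      _ = Real.exp (n * c ^ 2 / 8) * ∑ a, w a * Real.exp (g a - m) := by
          rw [Finset.mul_sum]; congr 1; ext a; ring
      _ ≤ Real.exp (n * c ^ 2 / 8) * Real.exp (c ^ 2 / 8) := by
          apply mul_le_mul_of_nonneg_left _ (Real.exp_pos _).le
          have := hoeff_step w hw0 hw1 g c hc hosc
          rwa [← hm] at this
      _ = Real.exp ((n + 1 : ℕ) * c ^ 2 / 8) := by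
          rw [← Real.exp_add]
          congr 1
          push_cast
          ring

/-- Chernoff + McDiarmid tail bound -/
private lemma tail_bound (w : α → ℝ) (hw0 : ∀ a, 0 ≤ w a) (hw1 : ∑ a, w a = 1)
    (n : ℕ) (hn : 1 ≤ n) (c t : ℝ) (hc : 0 < c) (ht : 0 < t)
    (f : (Fin n → α) → ℝ)
    (hf : ∀ (ω : Fin n → α) (i : Fin n) (b : α), f (Function.update ω i b) - f ω ≤ c) :
    ∑ ω ∈ univ.filter (fun ω : Fin n → α => Ex w n f + t ≤ f ω), (∏ i, w (ω i)) ≤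
      Real.exp (-2 * t ^ 2 / (n * c ^ 2)) := by
  have hnpos : (0:ℝ) < n := by exact_mod_cast hn
  set lam : ℝ := 4 * t / (n * c ^ 2) with hlam
  have hlampos : 0 < lam := by positivity
  set m := Ex w n f with hm
  have hmgf := mgf_bound w hw0 hw1 (lam * c) (by positivity) n (fun ω => lam * f ω)
    (fun ω i b => by
      have := hf ω i b
      calc lam * f (Function.update ω i b) - lam * f ω = lam * (f (Function.update ω i b) - f ω) := by ring
        _ ≤ lam * c := mul_le_mul_of_nonneg_left this hlampos.le)
  rw [Ex_smul] at hmgf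
  calc ∑ ω ∈ univ.filter (fun ω : Fin n → α => m + t ≤ f ω), (∏ i, w (ω i))
      ≤ ∑ ω ∈ univ.filter (fun ω : Fin n → α => m + t ≤ f ω),
          (∏ i, w (ω i)) * (Real.exp (lam * f ω - lam * m) * Real.exp (-(lam * t))) := by
        apply Finset.sum_le_sum
        intro ω hω
        rw [Finset.mem_filter] at hω
        have h1 : 0 ≤ lam * f ω - lam * m - lam * t := by
          have : m + t ≤ f ω := hω.2
          nlinarith
        have h2 : (1:ℝ) ≤ Real.exp (lam * f ω - lam * m) * Real.exp (-(lam * t)) := by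
          rw [← Real.exp_add]
          apply Real.one_le_exp
          linarith
        nlinarith [Finset.prod_nonneg (fun i (_ : i ∈ univ) => hw0 (ω i)),
          mul_le_mul_of_nonneg_left h2 (Finset.prod_nonneg (fun i (_ : i ∈ univ) => hw0 (ω i)))]
      _ ≤ ∑ ω : Fin n → α,
          (∏ i, w (ω i)) * (Real.exp (lam * f ω - lam * m) * Real.exp (-(lam * t))) := by
        apply Finset.sum_le_sum_of_subset_of_nonneg (Finset.filter_subset _ _)
        intro ω _ _
        exact mul_nonneg (Finset.prod_nonneg fun i _ => hw0 (ω i)) (by positivity)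
      _ = Real.exp (-(lam * t)) * Ex w n (fun ω => Real.exp (lam * f ω - lam * m)) := by
        rw [Ex, Finset.mul_sum]
        congr 1; ext ω; ring
      _ ≤ Real.exp (-(lam * t)) * Real.exp (n * (lam * c) ^ 2 / 8) := by
        apply mul_le_mul_of_nonneg_left _ (Real.exp_pos _).le
        convert hmgf using 3
      _ = Real.exp (n * (lam * c) ^ 2 / 8 - lam * t) := by rw [← Real.exp_add]; ring_nf
      _ = Real.exp (-2 * t ^ 2 / (n * c ^ 2)) := by
        congr 1
        rw [hlam]
        field_simp
        ring

/-- mean-zero sum has expectation zero -/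
private lemma Ex_sum_zero (w : α → ℝ) (hw0 : ∀ a, 0 ≤ w a) (hw1 : ∑ a, w a = 1)
    (x : α → ℝ) (hx : ∑ a, w a * x a = 0) :
    ∀ n : ℕ, Ex w n (fun ω => ∑ i, x (ω i)) = 0 := by
  intro n
  induction n with
  | zero => simpa using Ex_const w hw1 0 0
  | succ n ih =>
    rw [Ex_succ]
    have : ∀ a : α, Ex w n (fun ω => ∑ i : Fin (n+1), x ((Fin.cons a ω : Fin (n+1) → α) i)) = x a := by
      intro a
      have : (fun ω : Fin n → α => ∑ i : Fin (n+1), x ((Fin.cons a ω : Fin (n+1) → α) i)) =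
          (fun ω : Fin n → α => x a + ∑ i : Fin n, x (ω i)) := by
        ext ω
        rw [Fin.sum_univ_succ]
        simp
      rw [this, Ex_add, ih, Ex_const w hw1, add_zero]
    rw [Finset.sum_congr rfl (fun a _ => by rw [this a])]
    exact hx

/-- second moment of a mean-zero sum -/
private lemma Ex_sum_sq (w : α → ℝ) (hw0 : ∀ a, 0 ≤ w a) (hw1 : ∑ a, w a = 1)
    (x : α → ℝ) (hx : ∑ a, w a * x a = 0) :
    ∀ n : ℕ, Ex w n (fun ω => (∑ i, x (ω i)) ^ 2) = n * ∑ a, w a * x a ^ 2 := by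
  intro n
  induction n with
  | zero => simpa using Ex_const w hw1 0 0
  | succ n ih =>
    rw [Ex_succ]
    have key : ∀ a : α, Ex w n (fun ω => (∑ i : Fin (n+1), x ((Fin.cons a ω : Fin (n+1) → α) i)) ^ 2)
        = x a ^ 2 + n * ∑ b, w b * x b ^ 2 := by
      intro a
      have e1 : (fun ω : Fin n → α => (∑ i : Fin (n+1), x ((Fin.cons a ω : Fin (n+1) → α) i)) ^ 2) =
          (fun ω : Fin n → α => x a ^ 2 + ((2 * x a) * (∑ i : Fin n, x (ω i)) +
            (∑ i : Fin n, x (ω i)) ^ 2)) := by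
        ext ω
        rw [Fin.sum_univ_succ]
        simp only [Fin.cons_zero, Fin.cons_succ]
        ring
      rw [e1, Ex_add, Ex_add, Ex_const w hw1, Ex_smul, Ex_sum_zero w hw0 hw1 x hx, ih]
      ring
    rw [Finset.sum_congr rfl (fun a _ => by rw [key a])]
    have : ∑ a, w a * (x a ^ 2 + n * ∑ b, w b * x b ^ 2) =
        ∑ a, w a * x a ^ 2 + (∑ a, w a) * (n * ∑ b, w b * x b ^ 2) := by
      rw [Finset.sum_mul]
      rw [← Finset.sum_add_distrib]
      congr 1; ext a; ring
    rw [this, hw1]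
    push_cast
    ring

/-- Cauchy–Schwarz: Ex f ≤ √(Ex f²) for nonneg f -/
private lemma Ex_le_sqrt_sq (w : α → ℝ) (hw0 : ∀ a, 0 ≤ w a) (hw1 : ∑ a, w a = 1)
    (n : ℕ) (f : (Fin n → α) → ℝ) (hf : ∀ ω, 0 ≤ f ω) :
    Ex w n f ≤ Real.sqrt (Ex w n (fun ω => f ω ^ 2)) := by
  have hW : ∀ ω : Fin n → α, 0 ≤ ∏ i, w (ω i) :=
    fun ω => Finset.prod_nonneg fun i _ => hw0 (ω i)
  have hEnn : 0 ≤ Ex w n f := by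
    rw [Ex]; exact Finset.sum_nonneg fun ω _ => mul_nonneg (hW ω) (hf ω)
  rw [← Real.sqrt_sq hEnn]
  apply Real.sqrt_le_sqrt
  have cs := Finset.sum_mul_sq_le_sq_mul_sq univ (fun ω : Fin n → α => Real.sqrt (∏ i, w (ω i)))
    (fun ω : Fin n → α => Real.sqrt (∏ i, w (ω i)) * f ω)
  have e1 : ∑ ω : Fin n → α, Real.sqrt (∏ i, w (ω i)) * (Real.sqrt (∏ i, w (ω i)) * f ω) = Ex w n f := by
    rw [Ex]
    congr 1; ext ω
    rw [← mul_assoc, Real.mul_self_sqrt (hW ω)]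
  have e2 : ∑ ω : Fin n → α, (Real.sqrt (∏ i, w (ω i))) ^ 2 = 1 := by
    have : ∀ ω : Fin n → α, (Real.sqrt (∏ i, w (ω i))) ^ 2 = ∏ i, w (ω i) := fun ω => Real.sq_sqrt (hW ω)
    rw [Finset.sum_congr rfl fun ω _ => this ω]
    have := Ex_const w hw1 n 1
    rw [Ex] at this
    simpa using this
  have e3 : ∑ ω : Fin n → α, (Real.sqrt (∏ i, w (ω i)) * f ω) ^ 2 = Ex w n (fun ω => f ω ^ 2) := by
    rw [Ex]
    congr 1; ext ω
    rw [mul_pow, Real.sq_sqrt (hW ω)]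
  rw [e1, e2, e3, one_mul] at cs
  exact cs

section App

variable (P : α → ℝ) (n : ℕ)

private noncomputable def emp (ω : Fin n → α) (a : α) : ℝ :=
  (1 / (n : ℝ)) * (Finset.univ.filter (fun i => ω i = a)).card

private noncomputable def fdist (ω : Fin n → α) : ℝ := Real.sqrt (∑ a, (P a - emp n ω a) ^ 2)

private lemma card_filter_real (ω : Fin n → α) (a : α) :
    ((Finset.univ.filter (fun i => ω i = a)).card : ℝ) = ∑ i, (if ω i = a then (1:ℝ) else 0) := by
  rw [Finset.card_filter]
  push_cast
  rfl

private lemma fdist_nonneg (ω : Fin n → α) : 0 ≤ fdist P n ω := Real.sqrt_nonneg _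

/-- mean bound : E fdist ≤ √(1/n) -/
private lemma mean_bound (hP0 : ∀ a, 0 ≤ P a) (hP1 : ∑ a, P a = 1) (hn : 1 ≤ n) :
    Ex P n (fdist P n) ≤ Real.sqrt (1 / n) := by
  have hnpos : (0:ℝ) < n := by exact_mod_cast hn
  have h1 := Ex_le_sqrt_sq P hP0 hP1 n (fdist P n) (fdist_nonneg P n)
  refine h1.trans (Real.sqrt_le_sqrt ?_)
  -- Ex (fdist²) ≤ 1/n
  have hsq : ∀ ω : Fin n → α, fdist P n ω ^ 2 = ∑ a, (P a - emp n ω a) ^ 2 := by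
    intro ω
    rw [fdist, Real.sq_sqrt]
    exact Finset.sum_nonneg fun a _ => sq_nonneg _
  -- rewrite each coordinate via mean-zero increments
  set x : α → α → ℝ := fun a b => (if b = a then (1:ℝ) else 0) - P a with hxdef
  have hxmean : ∀ a, ∑ b, P b * x a b = 0 := by
    intro a
    simp only [hxdef, mul_sub]
    rw [Finset.sum_sub_distrib]
    have e1 : ∑ b, P b * (if b = a then (1:ℝ) else 0) = P a := by
      rw [Finset.sum_congr rfl (fun b _ => by rw [mul_ite, mul_one, mul_zero])]
      simp [Finset.sum_ite_eq']
    have e2 : ∑ b, P b * P a = P a := by rw [← Finset.sum_mul, hP1, one_mul]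
    rw [e1, e2, sub_self]
  have hcoord : ∀ (ω : Fin n → α) (a : α),
      P a - emp n ω a = (-(1 / (n:ℝ))) * ∑ i, x a (ω i) := by
    intro ω a
    have : ∑ i, x a (ω i) = ((Finset.univ.filter (fun i => ω i = a)).card : ℝ) - n * P a := by
      simp only [hxdef]
      rw [Finset.sum_sub_distrib, card_filter_real]
      simp [Finset.sum_const, mul_comm]
    rw [this, emp]
    field_simp
    ring
  have hvar : ∀ a, ∑ b, P b * x a b ^ 2 = P a - P a ^ 2 := by
    intro a
    have : ∀ b, P b * x a b ^ 2 =
        (P b * (if b = a then (1:ℝ) else 0) - 2 * P a * (P b * (if b = a then (1:ℝ) else 0)))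
          + P b * P a ^ 2 := by
      intro b
      simp only [hxdef]
      by_cases h : b = a <;> simp [h] <;> ring
    rw [Finset.sum_congr rfl fun b _ => this b]
    rw [Finset.sum_add_distrib, Finset.sum_sub_distrib]
    have e1 : ∑ b, P b * (if b = a then (1:ℝ) else 0) = P a := by
      rw [Finset.sum_congr rfl (fun b _ => by rw [mul_ite, mul_one, mul_zero])]
      simp [Finset.sum_ite_eq']
    have e2 : ∑ b, 2 * P a * (P b * (if b = a then (1:ℝ) else 0)) = 2 * P a * P a := by
      rw [← Finset.mul_sum, e1]
    have e3 : ∑ b, P b * P a ^ 2 = P a ^ 2 := by rw [← Finset.sum_mul, hP1, one_mul]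
    rw [e1, e2, e3]
    ring
  have key : Ex P n (fun ω => fdist P n ω ^ 2) = (1 - ∑ a, P a ^ 2) / n := by
    have e0 : (fun ω : Fin n → α => fdist P n ω ^ 2) =
        (fun ω : Fin n → α => ∑ a, (1 / (n:ℝ)) ^ 2 * (∑ i, x a (ω i)) ^ 2) := by
      ext ω
      rw [hsq ω]
      congr 1; ext a
      rw [hcoord ω a]
      ring
    rw [e0]
    have swap : Ex P n (fun ω => ∑ a, (1 / (n:ℝ)) ^ 2 * (∑ i, x a (ω i)) ^ 2) =
        ∑ a, Ex P n (fun ω => (1 / (n:ℝ)) ^ 2 * (∑ i, x a (ω i)) ^ 2) := by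
      rw [Ex]
      simp only [Finset.mul_sum]
      rw [Finset.sum_comm]
      rfl
    rw [swap]
    have each : ∀ a, Ex P n (fun ω => (1 / (n:ℝ)) ^ 2 * (∑ i, x a (ω i)) ^ 2) =
        (P a - P a ^ 2) / n := by
      intro a
      rw [Ex_smul, Ex_sum_sq P hP0 hP1 (x a) (hxmean a) n, hvar a]
      field_simp
    rw [Finset.sum_congr rfl fun a _ => each a, ← Finset.sum_div]
    congr 1
    rw [Finset.sum_sub_distrib, hP1]
  rw [key]
  have h2 : 1 - ∑ a, P a ^ 2 ≤ 1 := by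
    have : 0 ≤ ∑ a, P a ^ 2 := Finset.sum_nonneg fun a _ => sq_nonneg _
    linarith
  calc (1 - ∑ a, P a ^ 2) / n ≤ 1 / n := by gcongr
    _ = 1 / n := rfl

/-- bounded differences for fdist -/
private lemma fdist_bdd (hn : 1 ≤ n) (ω : Fin n → α) (i : Fin n) (b : α) :
    fdist P n (Function.update ω i b) - fdist P n ω ≤ Real.sqrt 2 / n := by
  have hnpos : (0:ℝ) < n := by exact_mod_cast hn
  set v : (Fin n → α) → EuclideanSpace ℝ α :=
    fun ω => WithLp.toLp 2 (fun a => P a - emp n ω a : α → ℝ) with hv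
  have hnorm : ∀ ω' : Fin n → α, fdist P n ω' = ‖v ω'‖ := by
    intro ω'
    rw [fdist, EuclideanSpace.norm_eq]
    congr 1
    exact Finset.sum_congr rfl fun a _ => by rw [Real.norm_eq_abs, sq_abs]
  set ω' := Function.update ω i b with hω'
  have hsub : ∀ a, (v ω' - v ω) a = (1 / (n:ℝ)) * ((if ω i = a then (1:ℝ) else 0) - (if b = a then (1:ℝ) else 0)) := by
    intro a
    have happ : (v ω' - v ω) a = (P a - emp n ω' a) - (P a - emp n ω a) := rfl
    rw [happ]
    have hcard : ((Finset.univ.filter (fun j => ω' j = a)).card : ℝ)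
        - ((Finset.univ.filter (fun j => ω j = a)).card : ℝ)
        = (if b = a then (1:ℝ) else 0) - (if ω i = a then (1:ℝ) else 0) := by
      rw [card_filter_real, card_filter_real, ← Finset.sum_sub_distrib]
      rw [Finset.sum_eq_single i]
      · simp [hω', Function.update_self]
      · intro j _ hj
        simp [hω', Function.update_of_ne hj]
      · simp
    simp only [emp]
    have : (P a - 1 / (n:ℝ) * ((Finset.univ.filter (fun j => ω' j = a)).card : ℝ))
        - (P a - 1 / (n:ℝ) * ((Finset.univ.filter (fun j => ω j = a)).card : ℝ))
        = -(1 / (n:ℝ)) * (((Finset.univ.filter (fun j => ω' j = a)).card : ℝ)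
          - ((Finset.univ.filter (fun j => ω j = a)).card : ℝ)) := by ring
    rw [this, hcard]
    ring
  have hnd : ‖v ω' - v ω‖ ≤ Real.sqrt 2 / n := by
    rw [EuclideanSpace.norm_eq]
    have : ∀ a, ‖(v ω' - v ω) a‖ ^ 2 = (1 / (n:ℝ)) ^ 2 *
        ((if ω i = a then (1:ℝ) else 0) - (if b = a then (1:ℝ) else 0)) ^ 2 := by
      intro a
      rw [Real.norm_eq_abs, sq_abs, hsub a]
      ring
    rw [Finset.sum_congr rfl fun a _ => this a]
    have hbd : ∑ a, (1 / (n:ℝ)) ^ 2 *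
        ((if ω i = a then (1:ℝ) else 0) - (if b = a then (1:ℝ) else 0)) ^ 2 ≤
        (1 / (n:ℝ)) ^ 2 * 2 := by
      rw [← Finset.mul_sum]
      apply mul_le_mul_of_nonneg_left _ (by positivity)
      have hper : ∀ a, ((if ω i = a then (1:ℝ) else 0) - (if b = a then (1:ℝ) else 0)) ^ 2 ≤
          (if ω i = a then (1:ℝ) else 0) + (if b = a then (1:ℝ) else 0) := by
        intro a
        by_cases h1 : ω i = a <;> by_cases h2 : b = a <;> simp [h1, h2]
      calc ∑ a, ((if ω i = a then (1:ℝ) else 0) - (if b = a then (1:ℝ) else 0)) ^ 2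
          ≤ ∑ a, ((if ω i = a then (1:ℝ) else 0) + (if b = a then (1:ℝ) else 0)) :=
            Finset.sum_le_sum fun a _ => hper a
        _ = 2 := by
            rw [Finset.sum_add_distrib]
            simp [Finset.sum_ite_eq]
            norm_num
    calc Real.sqrt (∑ a, (1 / (n:ℝ)) ^ 2 *
          ((if ω i = a then (1:ℝ) else 0) - (if b = a then (1:ℝ) else 0)) ^ 2)
        ≤ Real.sqrt ((1 / (n:ℝ)) ^ 2 * 2) := Real.sqrt_le_sqrt hbd
      _ = Real.sqrt 2 / n := by
          rw [Real.sqrt_mul (by positivity), Real.sqrt_sq (by positivity)]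
          field_simp
  calc fdist P n ω' - fdist P n ω = ‖v ω'‖ - ‖v ω‖ := by rw [hnorm, hnorm]
    _ ≤ ‖v ω' - v ω‖ := norm_sub_norm_le _ _
    _ ≤ Real.sqrt 2 / n := hnd

/-- the real-valued tail bound for the empirical L2 distance -/
private lemma main_real (hP0 : ∀ a, 0 ≤ P a) (hP1 : ∑ a, P a = 1)
    (hn : 1 ≤ n) (δ : ℝ) (hδ : δ ∈ Set.Ioo (0:ℝ) 1) :
    ∑ ω ∈ univ.filter (fun ω : Fin n → α =>
        ¬ (fdist P n ω ≤ (1 + Real.sqrt (Real.log (1 / δ))) / Real.sqrt n)),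
      (∏ i, P (ω i)) ≤ δ := by
  obtain ⟨hδ0, hδ1⟩ := hδ
  have hnpos : (0:ℝ) < n := by exact_mod_cast hn
  set L := Real.log (1 / δ) with hL
  have hLpos : 0 < L := by
    apply Real.log_pos
    rw [lt_div_iff₀ hδ0]
    linarith
  set t := Real.sqrt L / Real.sqrt n with ht
  have htpos : 0 < t := div_pos (Real.sqrt_pos.2 hLpos) (Real.sqrt_pos.2 hnpos)
  set c := Real.sqrt 2 / n with hc
  have hcpos : 0 < c := by
    apply div_pos (Real.sqrt_pos.2 (by norm_num)) hnpos
  have hsubset : univ.filter (fun ω : Fin n → α =>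
      ¬ (fdist P n ω ≤ (1 + Real.sqrt L) / Real.sqrt n)) ⊆
      univ.filter (fun ω : Fin n → α => Ex P n (fdist P n) + t ≤ fdist P n ω) := by
    intro ω hω
    rw [Finset.mem_filter] at hω ⊢
    refine ⟨mem_univ _, ?_⟩
    have h1 : (1 + Real.sqrt L) / Real.sqrt n < fdist P n ω := lt_of_not_ge hω.2
    have h2 : Ex P n (fdist P n) ≤ 1 / Real.sqrt n := by
      have hm := mean_bound P n hP0 hP1 hn
      have : Real.sqrt (1 / n) = 1 / Real.sqrt n := by
        rw [one_div, Real.sqrt_inv, one_div]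
      rwa [this] at hm
    have h3 : (1 + Real.sqrt L) / Real.sqrt n = 1 / Real.sqrt n + t := by
      rw [ht]; ring
    linarith
  have hexp : Real.exp (-2 * t ^ 2 / (n * c ^ 2)) = δ := by
    have hteq : t ^ 2 = L / n := by
      rw [ht, div_pow, Real.sq_sqrt hLpos.le, Real.sq_sqrt hnpos.le]
    have hceq : c ^ 2 = 2 / (n:ℝ) ^ 2 := by
      rw [hc, div_pow, Real.sq_sqrt (by norm_num : (0:ℝ) ≤ 2)]
    have harg : -2 * t ^ 2 / (n * c ^ 2) = -L := by
      rw [hteq, hceq]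
      field_simp
    rw [harg, Real.exp_neg, hL, Real.exp_log (by positivity), one_div, inv_inv]
  calc ∑ ω ∈ univ.filter (fun ω : Fin n → α =>
        ¬ (fdist P n ω ≤ (1 + Real.sqrt L) / Real.sqrt n)), (∏ i, P (ω i))
      ≤ ∑ ω ∈ univ.filter (fun ω : Fin n → α =>
          Ex P n (fdist P n) + t ≤ fdist P n ω), (∏ i, P (ω i)) :=
        Finset.sum_le_sum_of_subset_of_nonneg hsubset
          (fun ω _ _ => Finset.prod_nonneg fun i _ => hP0 (ω i))
    _ ≤ Real.exp (-2 * t ^ 2 / (n * c ^ 2)) :=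
        tail_bound P hP0 hP1 n hn c t hcpos htpos (fdist P n) (fun ω i b => fdist_bdd P n hn ω i b)
    _ = δ := hexp

end App


private lemma main_real' {α : Type*} [Fintype α] [Nonempty α] [DecidableEq α]
    (P : α → ℝ) (n : ℕ) (hP0 : ∀ a, 0 ≤ P a) (hP1 : ∑ a, P a = 1)
    (hn : 1 ≤ n) (δ : ℝ) (hδ : δ ∈ Set.Ioo (0:ℝ) 1) :
    ∑ ω ∈ univ.filter (fun ω : Fin n → α =>
        ¬ (Real.sqrt (∑ a, (P a -
            (1 / (n : ℝ)) * (Finset.univ.filter (fun i => ω i = a)).card) ^ 2) ≤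
          (1 + Real.sqrt (Real.log (1 / δ))) / Real.sqrt n)),
      (∏ i, P (ω i)) ≤ δ :=
  main_real P n hP0 hP1 hn δ hδ

end McDiarmidAux

open Finset in
/-- McDiarmid-type concentration of the empirical probability vector: with probability
at least `1 - δ` over `n` i.i.d. samples from `P`, the ℓ2 distance between the true and
the empirical probability vectors is at most `(1 + √(log(1/δ)))/√n`. -/
theorem empirical_pmf_l2_concentration
    {α : Type*} [Fintype α] [Nonempty α] [DecidableEq α]
    [MeasurableSpace α] [MeasurableSingletonClass α]
    (P : α → ℝ) (hP0 : ∀ a, 0 ≤ P a) (hP1 : ∑ a, P a = 1)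
    (ν : Measure α) [IsProbabilityMeasure ν]
    (hν : ∀ a, ν {a} = ENNReal.ofReal (P a))
    (n : ℕ) (hn : 1 ≤ n)
    (δ : ℝ) (hδ : δ ∈ Set.Ioo (0 : ℝ) 1) :
    ENNReal.ofReal (1 - δ) ≤
      Measure.pi (fun _ : Fin n => ν)
        {ω : Fin n → α |
          Real.sqrt (∑ a, (P a -
              (1 / (n : ℝ)) * (Finset.univ.filter (fun i => ω i = a)).card) ^ 2) ≤
            (1 + Real.sqrt (Real.log (1 / δ))) / Real.sqrt n} := by
  classical
  set μ := Measure.pi (fun _ : Fin n => ν) with hμ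
  -- every subset of the finite function space is measurable
  have hmeas : ∀ S : Set (Fin n → α), MeasurableSet S := by
    intro S
    have : S = ⋃ ω ∈ S, {ω} := (Set.biUnion_of_singleton S).symm
    rw [this]
    exact MeasurableSet.biUnion (Set.to_countable S) fun ω _ => measurableSet_singleton ω
  -- measure of a singleton
  have hsingle : ∀ ω : Fin n → α, μ {ω} = ENNReal.ofReal (∏ i, P (ω i)) := by
    intro ω
    have h1 : ({ω} : Set (Fin n → α)) = Set.pi Set.univ (fun i => {ω i}) :=
      (Set.univ_pi_singleton ω).symm
    rw [h1, hμ, Measure.pi_pi]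
    rw [Finset.prod_congr rfl fun i _ => hν (ω i)]
    rw [← ENNReal.ofReal_prod_of_nonneg fun i _ => hP0 (ω i)]
  -- measure of any set as a finite sum
  have hmeasure_sum : ∀ (p : (Fin n → α) → Prop) [DecidablePred p],
      μ {ω | p ω} = ∑ ω ∈ univ.filter p, ENNReal.ofReal (∏ i, P (ω i)) := by
    intro p hp
    have h1 : {ω | p ω} = ⋃ ω ∈ univ.filter p, ({ω} : Set (Fin n → α)) := by
      ext ω; simp
    have h2 : μ (⋃ ω ∈ univ.filter p, ({ω} : Set (Fin n → α))) =
        ∑ ω ∈ univ.filter p, μ {ω} := by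
      apply measure_biUnion_finset ?_ (fun ω _ => measurableSet_singleton ω)
      intro ω₁ _ ω₂ _ hne
      simp [Function.onFun, Set.disjoint_singleton, hne]
    rw [h1, h2]
    exact Finset.sum_congr rfl fun ω _ => hsingle ω
  set E := {ω : Fin n → α |
      Real.sqrt (∑ a, (P a -
          (1 / (n : ℝ)) * (Finset.univ.filter (fun i => ω i = a)).card) ^ 2) ≤
        (1 + Real.sqrt (Real.log (1 / δ))) / Real.sqrt n} with hE
  have hcompl_le : μ Eᶜ ≤ ENNReal.ofReal δ := by
    have hEc : Eᶜ = {ω : Fin n → α |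
        ¬ (Real.sqrt (∑ a, (P a -
            (1 / (n : ℝ)) * (Finset.univ.filter (fun i => ω i = a)).card) ^ 2) ≤
          (1 + Real.sqrt (Real.log (1 / δ))) / Real.sqrt n)} := by
      rw [hE]
      rfl
    rw [hEc, hmeasure_sum]
    rw [← ENNReal.ofReal_sum_of_nonneg fun ω _ => Finset.prod_nonneg fun i _ => hP0 (ω i)]
    apply ENNReal.ofReal_le_ofReal
    refine le_trans (le_of_eq ?_) (main_real' P n hP0 hP1 hn δ hδ)
    apply Finset.sum_congr ?_ (fun _ _ => rfl)
    apply Finset.filter_congr_decidable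
  have hprob : IsProbabilityMeasure μ := by
    rw [hμ]; infer_instance
  have hEeq : μ E = 1 - μ Eᶜ := by
    have := measure_compl (hmeas Eᶜ) (measure_ne_top μ Eᶜ)
    rw [compl_compl] at this
    rw [this, measure_univ]
  rw [hEeq]
  calc ENNReal.ofReal (1 - δ) = ENNReal.ofReal 1 - ENNReal.ofReal δ := by
        rw [ENNReal.ofReal_sub _ hδ.1.le]
    _ = 1 - ENNReal.ofReal δ := by rw [ENNReal.ofReal_one]
    _ ≤ 1 - μ Eᶜ := tsub_le_tsub_left hcompl_le 1
end
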